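/- arXiv:2102.01426 — 2 statements merged into one kernel-verified Lean document; each statement's English description precedes it below -/
import Mathlib

section
/- Let V be a Hamiltonian variety of pointed residuated lattices. Then V has the compact intersection property; indeed, for every A in V and all b₁,b₂,c₁,c₂ ∈ A, the intersection of the principal congruences generated by (b₁,b₂) and by (c₁,c₂) equals the principal congruence generated by (e, (b₁≡b₂)∨(c₁≡c₂)). -/
namespace Paper

open FirstOrder FirstOrder.Language FirstOrder.Language.Structure

universe u

/-- A bundled algebra: an `L`-structure with carrier in `Type u`. -/
structure Alg (L : FirstOrder.Language.{u, u}) : Type (u + 1) where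
  carrier : Type u
  [str : L.Structure carrier]

attribute [instance] Alg.str

variable {L : FirstOrder.Language.{u, u}}

/-- The direct product of a family of `L`-structures. -/
instance piStructure {ι : Type u} (M : ι → Type u) [∀ i, L.Structure (M i)] :
    L.Structure (∀ i, M i) where
  funMap f x i := funMap f fun j => x j i
  RelMap r x := ∀ i, RelMap r fun j => x j i

/-- An equation `s ≈ t` holds in `M` under the assignment `v`. -/
def EqHolds {α : Type} {M : Type u} [L.Structure M]
    (ε : L.Term α × L.Term α) (v : α → M) : Prop :=
  ε.1.realize v = ε.2.realize v

/-- A (finite) conjunction of equations holds under the assignment `v`. -/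
def ConjHolds {α : Type} {M : Type u} [L.Structure M]
    (c : List (L.Term α × L.Term α)) (v : α → M) : Prop :=
  ∀ ε ∈ c, EqHolds ε v

/-- A (finite) conjunction of negated equations holds under the assignment `v`. -/
def NegConjHolds {α : Type} {M : Type u} [L.Structure M]
    (c : List (L.Term α × L.Term α)) (v : α → M) : Prop :=
  ∀ ε ∈ c, ¬ EqHolds ε v

/-- The first-order theory of a class of algebras. -/
def theoryOf (K : Set (Alg L)) : L.Theory :=
  {φ | ∀ A ∈ K, A.carrier ⊨ φ}

/-- A sentence is universal if it is the universal closure of a quantifier-free formula. -/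
def IsUniversalSentence (φ : L.Sentence) : Prop :=
  ∃ (n : ℕ) (ψ : L.BoundedFormula Empty n), ψ.IsQF ∧ φ = ψ.alls

/-- Semantic entailment of a sentence from a theory. -/
def Entails (T : L.Theory) (φ : L.Sentence) : Prop :=
  ∀ (M : Type u) [L.Structure M] [Nonempty M], M ⊨ T → M ⊨ φ

/-- Two theories are co-theories when they entail the same universal sentences. -/
def AreCotheories (T T' : L.Theory) : Prop :=
  ∀ φ : L.Sentence, IsUniversalSentence φ → (Entails T φ ↔ Entails T' φ)

/-- A theory is model complete when every embedding between its models is elementary. -/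
def IsModelComplete (T : L.Theory) : Prop :=
  ∀ (M N : Type u) [L.Structure M] [L.Structure N] [Nonempty M] [Nonempty N],
    M ⊨ T → N ⊨ T → ∀ (f : M ↪[L] N) (n : ℕ) (φ : L.Formula (Fin n)) (v : Fin n → M),
      φ.Realize (f ∘ v) ↔ φ.Realize v

/-- `T'` is a model companion of `T`. -/
def IsModelCompanion (T T' : L.Theory) : Prop :=
  IsModelComplete T' ∧ AreCotheories T T'

/-- The (quantifier-free) diagram of a structure: all quantifier-free sentences with
parameters from `M` that hold in `M`. -/
def diagram (L : FirstOrder.Language.{u, u}) (M : Type u) [L.Structure M] :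
    (L[[M]]).Theory :=
  {φ | BoundedFormula.IsQF φ ∧ M ⊨ φ}

/-- `T'` is a model completion of `T`: a model companion such that, for every model `M` of `T`,
`T'` together with the diagram of `M` is complete. -/
def IsModelCompletion (T T' : L.Theory) : Prop :=
  IsModelCompanion T T' ∧
    ∀ (M : Type u) [L.Structure M] [Nonempty M], M ⊨ T →
      Theory.IsComplete ((L.lhomWithConstants M).onTheory T' ∪ diagram L M)

/-- The theory of the class `K` has a model completion. -/
def HasModelCompletion (K : Set (Alg L)) : Prop :=
  ∃ T' : L.Theory, IsModelCompletion (theoryOf K) T'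

/-- `K` is a universal class: it is closed under isomorphisms, substructures and ultraproducts. -/
def IsUniversalClass (K : Set (Alg L)) : Prop :=
  (∀ A ∈ K, ∀ (N : Type u) [L.Structure N], Nonempty (A.carrier ≃[L] N) → Alg.mk N ∈ K) ∧
  (∀ A ∈ K, ∀ S : L.Substructure A.carrier, Alg.mk (↥S) ∈ K) ∧
  (∀ (ι : Type u) (F : Ultrafilter ι) (M : ι → Type u) [∀ i, L.Structure (M i)],
      (∀ i, Alg.mk (M i) ∈ K) → Alg.mk ((F : Filter ι).Product M) ∈ K)

/-- `K` is a variety: it is closed under homomorphic images, substructures and products. -/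
def IsVariety (K : Set (Alg L)) : Prop :=
  (∀ A ∈ K, ∀ (N : Type u) [L.Structure N] (f : A.carrier →[L] N),
      Function.Surjective ⇑f → Alg.mk N ∈ K) ∧
  (∀ A ∈ K, ∀ S : L.Substructure A.carrier, Alg.mk (↥S) ∈ K) ∧
  (∀ (ι : Type u) (M : ι → Type u) [∀ i, L.Structure (M i)],
      (∀ i, Alg.mk (M i) ∈ K) → Alg.mk (∀ i, M i) ∈ K)

/-- The amalgamation property. -/
def Amalgamation (K : Set (Alg L)) : Prop :=
  ∀ A ∈ K, ∀ B ∈ K, ∀ C ∈ K,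
    ∀ (f : A.carrier ↪[L] B.carrier) (g : A.carrier ↪[L] C.carrier),
      ∃ D ∈ K, ∃ (h : B.carrier ↪[L] D.carrier) (k : C.carrier ↪[L] D.carrier),
        ∀ a : A.carrier, h (f a) = k (g a)

/-- The variable projection property. -/
def VarProj (K : Set (Alg L)) : Prop :=
  ∀ (n : ℕ) (φ : List (L.Term (Fin n ⊕ Unit) × L.Term (Fin n ⊕ Unit))),
    ∃ ξ : L.Formula (Fin n), ξ.IsQF ∧
      (∀ A ∈ K, ∀ v : Fin n ⊕ Unit → A.carrier, ConjHolds φ v → ξ.Realize (v ∘ Sum.inl)) ∧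
      (∀ ε : L.Term (Fin n) × L.Term (Fin n),
        (∀ A ∈ K, ∀ v : Fin n ⊕ Unit → A.carrier, ConjHolds φ v → EqHolds ε (v ∘ Sum.inl)) →
        (∀ A ∈ K, ∀ v : Fin n → A.carrier, ξ.Realize v → EqHolds ε v))

/-- The equational variable projection property. -/
def EqVarProj (K : Set (Alg L)) : Prop :=
  ∀ (n : ℕ) (φ : List (L.Term (Fin n ⊕ Unit) × L.Term (Fin n ⊕ Unit))),
    ∃ ξ : List (L.Term (Fin n) × L.Term (Fin n)),
      (∀ A ∈ K, ∀ v : Fin n ⊕ Unit → A.carrier, ConjHolds φ v → ConjHolds ξ (v ∘ Sum.inl)) ∧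
      (∀ ε : L.Term (Fin n) × L.Term (Fin n),
        (∀ A ∈ K, ∀ v : Fin n ⊕ Unit → A.carrier, ConjHolds φ v → EqHolds ε (v ∘ Sum.inl)) →
        (∀ A ∈ K, ∀ v : Fin n → A.carrier, ConjHolds ξ v → EqHolds ε v))

/-- The conservative model extension property. -/
def ConsModelExt (K : Set (Alg L)) : Prop :=
  ∀ (n : ℕ) (pos neg : List (L.Term (Fin n ⊕ Unit) × L.Term (Fin n ⊕ Unit))),
    ∃ χ : L.Formula (Fin n), χ.IsQF ∧
      (∀ A ∈ K, ∀ v : Fin n ⊕ Unit → A.carrier,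
        ConjHolds pos v → NegConjHolds neg v → χ.Realize (v ∘ Sum.inl)) ∧
      (∀ A ∈ K, ∀ a : Fin n → A.carrier,
        Substructure.closure L (Set.range a) = ⊤ →
        χ.Realize a →
        (∀ ε : L.Term (Fin n) × L.Term (Fin n),
          (∀ B ∈ K, ∀ v : Fin n ⊕ Unit → B.carrier,
            ConjHolds pos v → EqHolds ε (v ∘ Sum.inl)) →
          EqHolds ε a) →
        ∃ B ∈ K, ∃ (g : A.carrier ↪[L] B.carrier) (b : B.carrier),
          ConjHolds pos (Sum.elim (⇑g ∘ a) fun _ => b) ∧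
          NegConjHolds neg (Sum.elim (⇑g ∘ a) fun _ => b))

/-- The strengthened extension property of Proposition 3.8 (tuples of new variables, and no
conservativity conditions). -/
def StrongModelExt (K : Set (Alg L)) : Prop :=
  ∀ (n m : ℕ) (pos neg : List (L.Term (Fin n ⊕ Fin m) × L.Term (Fin n ⊕ Fin m))),
    ∃ χ : L.Formula (Fin n), χ.IsQF ∧
      (∀ A ∈ K, ∀ v : Fin n ⊕ Fin m → A.carrier,
        ConjHolds pos v → NegConjHolds neg v → χ.Realize (v ∘ Sum.inl)) ∧
      (∀ A ∈ K, ∀ a : Fin n → A.carrier, χ.Realize a →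
        ∃ B ∈ K, ∃ (g : A.carrier ↪[L] B.carrier) (b : Fin m → B.carrier),
          ConjHolds pos (Sum.elim (⇑g ∘ a) b) ∧ NegConjHolds neg (Sum.elim (⇑g ∘ a) b))

/-- The equational variable restriction property. `π` is either `⊥` (encoded by `none`) or a
conjunction of equations. -/
def OptConjHolds {α : Type} {M : Type u} [L.Structure M] :
    Option (List (L.Term α × L.Term α)) → (α → M) → Prop
  | none => fun _ => False
  | some c => fun v => ConjHolds c v

def EqVarRestrict (K : Set (Alg L)) : Prop :=
  ∀ (n : ℕ) (γ : List (L.Term (Fin n ⊕ Unit) × L.Term (Fin n ⊕ Unit))),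
    ∃ π : Option (List (L.Term (Fin n) × L.Term (Fin n))),
      (∀ A ∈ K, ∀ v : Fin n ⊕ Unit → A.carrier, OptConjHolds π (v ∘ Sum.inl) → ConjHolds γ v) ∧
      (∀ φ : List (L.Term (Fin n) × L.Term (Fin n)),
        (∀ A ∈ K, ∀ v : Fin n ⊕ Unit → A.carrier, ConjHolds φ (v ∘ Sum.inl) → ConjHolds γ v) →
        (∀ A ∈ K, ∀ v : Fin n → A.carrier, ConjHolds φ v → OptConjHolds π v))

/-- A locally finite class of algebras. -/
def LocallyFinite (K : Set (Alg L)) : Prop :=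
  ∀ A ∈ K, ∀ S : L.Substructure A.carrier, S.FG → Finite ↥S

/-- A congruence of an `L`-structure. -/
structure Congruence (L : FirstOrder.Language.{u, u}) (M : Type u) [L.Structure M] :
    Type u where
  rel : M → M → Prop
  refl : ∀ a, rel a a
  symm : ∀ a b, rel a b → rel b a
  trans : ∀ a b c, rel a b → rel b c → rel a c
  compat : ∀ (n : ℕ) (f : L.Functions n) (x y : Fin n → M),
    (∀ i, rel (x i) (y i)) → rel (funMap f x) (funMap f y)

/-- The congruence generated by a set of pairs. -/
def congGen (L : FirstOrder.Language.{u, u}) (M : Type u) [L.Structure M]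
    (s : Set (M × M)) : Congruence L M where
  rel a b := ∀ θ : Congruence L M, (∀ p ∈ s, θ.rel p.1 p.2) → θ.rel a b
  refl a θ _ := θ.refl a
  symm a b h θ hs := θ.symm a b (h θ hs)
  trans a b c h₁ h₂ θ hs := θ.trans a b c (h₁ θ hs) (h₂ θ hs)
  compat n f x y h θ hs := θ.compat n f x y fun i => h i θ hs

/-- The principal congruence generated by a pair. -/
def principalCong (L : FirstOrder.Language.{u, u}) (M : Type u) [L.Structure M]
    (b₁ b₂ : M) : Congruence L M :=
  congGen L M {(b₁, b₂)}

/-- A compact (finitely generated) congruence. -/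
def Congruence.IsCompact {M : Type u} [L.Structure M] (θ : Congruence L M) : Prop :=
  ∃ s : Set (M × M), s.Finite ∧ ∀ a b, θ.rel a b ↔ (congGen L M s).rel a b

/-- The meet of two congruences. -/
def infCong {M : Type u} [L.Structure M] (θ₁ θ₂ : Congruence L M) : Congruence L M where
  rel a b := θ₁.rel a b ∧ θ₂.rel a b
  refl a := ⟨θ₁.refl a, θ₂.refl a⟩
  symm a b h := ⟨θ₁.symm a b h.1, θ₂.symm a b h.2⟩
  trans a b c h₁ h₂ := ⟨θ₁.trans a b c h₁.1 h₂.1, θ₂.trans a b c h₁.2 h₂.2⟩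
  compat n f x y h :=
    ⟨θ₁.compat n f x y fun i => (h i).1, θ₂.compat n f x y fun i => (h i).2⟩

/-- The join of two congruences. -/
def supCong {M : Type u} [L.Structure M] (θ₁ θ₂ : Congruence L M) : Congruence L M :=
  congGen L M {p : M × M | θ₁.rel p.1 p.2 ∨ θ₂.rel p.1 p.2}

/-- The compact intersection property. -/
def HasCIP (K : Set (Alg L)) : Prop :=
  ∀ A ∈ K, ∀ θ₁ θ₂ : Congruence L A.carrier,
    θ₁.IsCompact → θ₂.IsCompact → (infCong θ₁ θ₂).IsCompact

/-- Congruence distributivity of a class. -/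
def CongDistributive (K : Set (Alg L)) : Prop :=
  ∀ A ∈ K, ∀ θ₁ θ₂ θ₃ : Congruence L A.carrier, ∀ a b : A.carrier,
    (infCong θ₁ (supCong θ₂ θ₃)).rel a b ↔ (supCong (infCong θ₁ θ₂) (infCong θ₁ θ₃)).rel a b

/-- The congruence extension property. -/
def CongExtension (K : Set (Alg L)) : Prop :=
  ∀ A ∈ K, ∀ (S : L.Substructure A.carrier) (θ : Congruence L ↥S),
    ∃ θ' : Congruence L A.carrier, ∀ a b : ↥S, θ'.rel ↑a ↑b ↔ θ.rel a b

/-- Equationally definable principal congruences. -/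
def EDPC (K : Set (Alg L)) : Prop :=
  ∃ φ : List (L.Term (Fin 4) × L.Term (Fin 4)),
    ∀ A ∈ K, ∀ a₁ a₂ b₁ b₂ : A.carrier,
      (principalCong L A.carrier b₁ b₂).rel a₁ a₂ ↔ ConjHolds φ ![a₁, a₂, b₁, b₂]

/-- Quantifier-free definable principal congruences. -/
def QFDPC (K : Set (Alg L)) : Prop :=
  ∃ α : L.Formula (Fin 4), α.IsQF ∧
    ∀ A ∈ K, ∀ a₁ a₂ b₁ b₂ : A.carrier,
      (principalCong L A.carrier b₁ b₂).rel a₁ a₂ ↔ α.Realize ![a₁, a₂, b₁, b₂]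

/-- Parametrically definable principal congruences. -/
def PDPC (K : Set (Alg L)) : Prop :=
  ∃ (m : ℕ) (ξ : L.Formula (Fin 4 ⊕ Fin m)), ξ.IsQF ∧
    ∀ A ∈ K, ∀ a₁ a₂ b₁ b₂ : A.carrier,
      (principalCong L A.carrier b₁ b₂).rel a₁ a₂ ↔
        ∀ B ∈ K, ∀ g : A.carrier ↪[L] B.carrier, ∀ w : Fin m → B.carrier,
          ξ.Realize (Sum.elim (fun i : Fin 4 => g (![a₁, a₂, b₁, b₂] i)) w)

/-- The pair `(γ, φ)` witnesses a guarded deduction theorem for `K`. -/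
def GuardedDTWitness (K : Set (Alg L)) (m : ℕ)
    (γ φ : List (L.Term (Fin 4 ⊕ Fin m) × L.Term (Fin 4 ⊕ Fin m))) : Prop :=
  ∀ (p : ℕ) (s₁ s₂ t₁ t₂ : L.Term (Fin p)) (π : List (L.Term (Fin p) × L.Term (Fin p))),
    ((∀ A ∈ K, ∀ v : Fin p → A.carrier,
        ConjHolds π v → t₁.realize v = t₂.realize v → s₁.realize v = s₂.realize v) ↔
      (∀ A ∈ K, ∀ v : Fin p → A.carrier, ConjHolds π v →
        ∀ w : Fin m → A.carrier,
          ConjHolds γ (Sum.elim ![s₁.realize v, s₂.realize v, t₁.realize v, t₂.realize v] w) →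
          ConjHolds φ (Sum.elim ![s₁.realize v, s₂.realize v, t₁.realize v, t₂.realize v] w))) ∧
    (∀ σ : L.Term (Fin p) × L.Term (Fin p),
      ((∀ A ∈ K, ∀ v : Fin p → A.carrier, ∀ w : Fin m → A.carrier,
          ConjHolds π v →
          ConjHolds γ (Sum.elim ![s₁.realize v, s₂.realize v, t₁.realize v, t₂.realize v] w) →
          EqHolds σ v) ↔
        (∀ A ∈ K, ∀ v : Fin p → A.carrier, ConjHolds π v → EqHolds σ v)))

/-- `K` has a guarded deduction theorem. -/
def GuardedDT (K : Set (Alg L)) : Prop :=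
  ∃ (m : ℕ) (γ φ : List (L.Term (Fin 4 ⊕ Fin m) × L.Term (Fin 4 ⊕ Fin m))),
    GuardedDTWitness K m γ φ

/-- The term algebra. -/
instance termStructure (α : Type) : L.Structure (L.Term α) where
  funMap f x := Term.func f x
  RelMap _ _ := False

/-- The congruence of the term algebra consisting of the identities of the class `K`. -/
def varietyCong (K : Set (Alg L)) (α : Type) : Congruence L (L.Term α) where
  rel s t := ∀ A ∈ K, ∀ v : α → A.carrier, s.realize v = t.realize v
  refl _ _ _ _ := rfl
  symm _ _ h A hA v := (h A hA v).symm
  trans _ _ _ h₁ h₂ A hA v := (h₁ A hA v).trans (h₂ A hA v)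
  compat n f x y h A hA v := by
    show Term.realize v (Term.func f x) = Term.realize v (Term.func f y)
    simp only [Term.realize]
    exact congrArg (funMap f) (funext fun i => h i A hA v)

/-- The setoid underlying a congruence. -/
def Congruence.setoid {M : Type u} [L.Structure M] (θ : Congruence L M) : Setoid M :=
  ⟨θ.rel, ⟨θ.refl, fun h => θ.symm _ _ h, fun h h' => θ.trans _ _ _ h h'⟩⟩

/-- The quotient of an algebra by a congruence. -/
abbrev QuotAlg {M : Type u} [L.Structure M] (θ : Congruence L M) : Type u :=
  Quotient θ.setoid

noncomputable instance quotAlgStructure {M : Type u} [L.Structure M] (θ : Congruence L M) :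
    L.Structure (QuotAlg θ) where
  funMap f x := Quotient.mk θ.setoid (funMap f fun i => (x i).out)
  RelMap _ _ := False

/-- The free algebra of the class `K` over the variables `α`. -/
abbrev FreeAlg (K : Set (Alg L)) (α : Type) : Type u :=
  QuotAlg (varietyCong K α)

/-- `A` is finitely presented relative to the class `K`: it is isomorphic to a quotient of a
finitely generated `K`-free algebra by a compact congruence. -/
def IsFinitelyPresentedIn (K : Set (Alg L)) (A : Type u) [L.Structure A] : Prop :=
  ∃ (n : ℕ) (s : Set (FreeAlg K (Fin n) × FreeAlg K (Fin n))), s.Finite ∧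
    Nonempty (A ≃[L] QuotAlg (congGen L (FreeAlg K (Fin n)) s))

/-- Coherence: every finitely generated subalgebra of a finitely presented member of `K` is
finitely presented. -/
def Coherent (K : Set (Alg L)) : Prop :=
  ∀ A ∈ K, IsFinitelyPresentedIn K A.carrier →
    ∀ S : L.Substructure A.carrier, S.FG → IsFinitelyPresentedIn K ↥S


/-! ### The language of pointed residuated lattices -/

/-- Function symbols of the language of pointed residuated lattices. -/
inductive RLFunc : ℕ → Type u
  | meet : RLFunc 2
  | join : RLFunc 2
  | mul : RLFunc 2
  | ldiv : RLFunc 2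
  | rdiv : RLFunc 2
  | unit : RLFunc 0
  | zero : RLFunc 0

/-- The (algebraic) language of pointed residuated lattices. -/
def RLLang : FirstOrder.Language.{u, u} :=
  ⟨RLFunc.{u}, fun _ => PEmpty⟩

section RLOps

variable {A : Type u} [RLLang.{u}.Structure A]

/-- The meet operation. -/
def rlMeet (a b : A) : A := funMap (L := RLLang) RLFunc.meet ![a, b]

/-- The join operation. -/
def rlJoin (a b : A) : A := funMap (L := RLLang) RLFunc.join ![a, b]

/-- The monoid operation. -/
def rlMul (a b : A) : A := funMap (L := RLLang) RLFunc.mul ![a, b]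

/-- The left residual `a \ b`. -/
def rlLdiv (a b : A) : A := funMap (L := RLLang) RLFunc.ldiv ![a, b]

/-- The right residual `a / b`. -/
def rlRdiv (a b : A) : A := funMap (L := RLLang) RLFunc.rdiv ![a, b]

/-- The monoid unit `e`. -/
def rlE : A := funMap (L := RLLang) RLFunc.unit ![]

/-- The constant `0`. -/
def rlZ : A := funMap (L := RLLang) RLFunc.zero ![]

/-- The lattice order `a ≤ b ⟺ a ∧ b = a`. -/
def rlLe (a b : A) : Prop := rlMeet a b = a

/-- The operation `x ≡ y := (x\y) ∧ (y\x) ∧ e`. -/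
def rlEquiv (a b : A) : A := rlMeet (rlMeet (rlLdiv a b) (rlLdiv b a)) rlE

/-- Powers: `a^0 = e` and `a^(n+1) = a · a^n`. -/
def rlPow (a : A) : ℕ → A
  | 0 => rlE
  | n + 1 => rlMul a (rlPow a n)

end RLOps

/-- `A` is a pointed residuated lattice: `⟨A,∧,∨⟩` is a lattice, `⟨A,·,e⟩` is a monoid, and
`\, /` are the left and right residuals of `·`. -/
structure IsPRL (A : Type u) [RLLang.{u}.Structure A] : Prop where
  meet_comm : ∀ a b : A, rlMeet a b = rlMeet b a
  meet_assoc : ∀ a b c : A, rlMeet (rlMeet a b) c = rlMeet a (rlMeet b c)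
  join_comm : ∀ a b : A, rlJoin a b = rlJoin b a
  join_assoc : ∀ a b c : A, rlJoin (rlJoin a b) c = rlJoin a (rlJoin b c)
  absorb₁ : ∀ a b : A, rlMeet a (rlJoin a b) = a
  absorb₂ : ∀ a b : A, rlJoin a (rlMeet a b) = a
  mul_assoc : ∀ a b c : A, rlMul (rlMul a b) c = rlMul a (rlMul b c)
  one_mul : ∀ a : A, rlMul rlE a = a
  mul_one : ∀ a : A, rlMul a rlE = a
  ldiv_resid : ∀ a b c : A, rlLe b (rlLdiv a c) ↔ rlLe (rlMul a b) c
  rdiv_resid : ∀ a b c : A, rlLe (rlMul a b) c ↔ rlLe a (rlRdiv c b)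

/-- A class of pointed residuated lattices is Hamiltonian if, for some `k ≥ 1`, all of its
members satisfy `(x ∧ e)^k · y ≈ y · (x ∧ e)^k`. -/
def Hamiltonian (K : Set (Alg RLLang.{u})) : Prop :=
  ∃ k : ℕ, 0 < k ∧ ∀ A ∈ K, ∀ x y : A.carrier,
    rlMul (rlPow (rlMeet x rlE) k) y = rlMul y (rlPow (rlMeet x rlE) k)


/-! ### Auxiliary lemmas for the proof -/

section AuxRL

variable {A : Type u} [RLLang.{u}.Structure A]

/-- basic order facts -/
lemma rl_meet_idem (h : IsPRL A) (a : A) : rlMeet a a = a := by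
  have := h.absorb₁ a (rlMeet a a)
  rwa [h.absorb₂ a a] at this

lemma rl_le_refl (h : IsPRL A) (a : A) : rlLe a a := rl_meet_idem h a

lemma rl_le_trans (h : IsPRL A) {a b c : A} (hab : rlLe a b) (hbc : rlLe b c) :
    rlLe a c := by
  have hab' : rlMeet a b = a := hab
  have hbc' : rlMeet b c = b := hbc
  show rlMeet a c = a
  calc rlMeet a c = rlMeet (rlMeet a b) c := by rw [hab']
    _ = rlMeet a (rlMeet b c) := h.meet_assoc a b c
    _ = rlMeet a b := by rw [hbc']
    _ = a := hab'

lemma rl_meet_le_left (h : IsPRL A) (a b : A) : rlLe (rlMeet a b) a := by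
  show rlMeet (rlMeet a b) a = rlMeet a b
  calc rlMeet (rlMeet a b) a = rlMeet a (rlMeet b a) := h.meet_assoc a b a
    _ = rlMeet a (rlMeet a b) := by rw [h.meet_comm b a]
    _ = rlMeet (rlMeet a a) b := (h.meet_assoc a a b).symm
    _ = rlMeet a b := by rw [rl_meet_idem h a]

lemma rl_meet_le_right (h : IsPRL A) (a b : A) : rlLe (rlMeet a b) b := by
  show rlMeet (rlMeet a b) b = rlMeet a b
  calc rlMeet (rlMeet a b) b = rlMeet a (rlMeet b b) := h.meet_assoc a b b
    _ = rlMeet a b := by rw [rl_meet_idem h b]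

lemma rl_le_meet (h : IsPRL A) {a b c : A} (ha : rlLe c a) (hb : rlLe c b) :
    rlLe c (rlMeet a b) := by
  have ha' : rlMeet c a = c := ha
  have hb' : rlMeet c b = c := hb
  show rlMeet c (rlMeet a b) = c
  calc rlMeet c (rlMeet a b) = rlMeet (rlMeet c a) b := (h.meet_assoc c a b).symm
    _ = rlMeet c b := by rw [ha']
    _ = c := hb'

lemma rl_le_join_left (h : IsPRL A) (a b : A) : rlLe a (rlJoin a b) := h.absorb₁ a b

lemma rl_le_join_right (h : IsPRL A) (a b : A) : rlLe b (rlJoin a b) := by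
  show rlMeet b (rlJoin a b) = b
  rw [h.join_comm a b]
  exact h.absorb₁ b a

lemma rl_join_of_le (h : IsPRL A) {a b : A} (hab : rlLe a b) : rlJoin a b = b := by
  have hab' : rlMeet a b = a := hab
  calc rlJoin a b = rlJoin (rlMeet a b) b := by rw [hab']
    _ = rlJoin b (rlMeet b a) := by rw [h.join_comm, h.meet_comm]
    _ = b := h.absorb₂ b a

lemma rl_le_of_join (h : IsPRL A) {a b : A} (hab : rlJoin a b = b) : rlLe a b := by
  show rlMeet a b = a
  rw [← hab]
  exact h.absorb₁ a b

lemma rl_join_le (h : IsPRL A) {a b c : A} (ha : rlLe a c) (hb : rlLe b c) :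
    rlLe (rlJoin a b) c := by
  apply rl_le_of_join h
  calc rlJoin (rlJoin a b) c = rlJoin a (rlJoin b c) := h.join_assoc a b c
    _ = rlJoin a c := by rw [rl_join_of_le h hb]
    _ = c := rl_join_of_le h ha

/-- residuation facts -/
lemma rl_mul_le_mul_left (h : IsPRL A) {b c : A} (a : A) (hbc : rlLe b c) :
    rlLe (rlMul a b) (rlMul a c) := by
  rw [← h.ldiv_resid]
  exact rl_le_trans h hbc ((h.ldiv_resid a c (rlMul a c)).mpr (rl_le_refl h _))

lemma rl_mul_le_mul_right (h : IsPRL A) {a b : A} (c : A) (hab : rlLe a b) :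
    rlLe (rlMul a c) (rlMul b c) := by
  rw [h.rdiv_resid]
  exact rl_le_trans h hab ((h.rdiv_resid b c (rlMul b c)).mp (rl_le_refl h _))

lemma rl_mul_le_mul (h : IsPRL A) {a b c d : A} (hab : rlLe a b) (hcd : rlLe c d) :
    rlLe (rlMul a c) (rlMul b d) :=
  rl_le_trans h (rl_mul_le_mul_right h c hab) (rl_mul_le_mul_left h b hcd)

lemma rl_mul_le_one (h : IsPRL A) {a b : A} (ha : rlLe a rlE) (hb : rlLe b rlE) :
    rlLe (rlMul a b) rlE := by
  have := rl_mul_le_mul h ha hb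
  rwa [h.one_mul] at this

lemma rl_mul_join_le (h : IsPRL A) {x y a c : A} (hx : rlLe (rlMul x a) c)
    (hy : rlLe (rlMul y a) c) : rlLe (rlMul (rlJoin x y) a) c := by
  rw [h.rdiv_resid]
  exact rl_join_le h ((h.rdiv_resid x a c).mp hx) ((h.rdiv_resid y a c).mp hy)

lemma rl_mul_join_le' (h : IsPRL A) {x y a c : A} (hx : rlLe (rlMul a x) c)
    (hy : rlLe (rlMul a y) c) : rlLe (rlMul a (rlJoin x y)) c := by
  rw [← h.ldiv_resid]
  exact rl_join_le h ((h.ldiv_resid a x c).mpr hx) ((h.ldiv_resid a y c).mpr hy)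

lemma rl_mul_ldiv_le (h : IsPRL A) (a b : A) : rlLe (rlMul a (rlLdiv a b)) b :=
  (h.ldiv_resid a (rlLdiv a b) b).mp (rl_le_refl h _)

lemma rl_rdiv_mul_le (h : IsPRL A) (a b : A) : rlLe (rlMul (rlRdiv b a) a) b :=
  (h.rdiv_resid (rlRdiv b a) a b).mpr (rl_le_refl h _)

lemma rl_one_le_ldiv_self (h : IsPRL A) (a : A) : rlLe rlE (rlLdiv a a) := by
  rw [h.ldiv_resid, h.mul_one]
  exact rl_le_refl h a

/-- power facts -/
lemma rlPow_add (h : IsPRL A) (u : A) (m n : ℕ) :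
    rlPow u (m + n) = rlMul (rlPow u m) (rlPow u n) := by
  induction m with
  | zero => simp [rlPow, h.one_mul, Nat.zero_add]
  | succ m ih =>
      have : m + 1 + n = (m + n) + 1 := by omega
      rw [this]
      show rlMul u (rlPow u (m + n)) = rlMul (rlMul u (rlPow u m)) (rlPow u n)
      rw [ih, h.mul_assoc]

lemma rl_pow_le_one (h : IsPRL A) {u : A} (hu : rlLe u rlE) (n : ℕ) :
    rlLe (rlPow u n) rlE := by
  induction n with
  | zero => exact rl_le_refl h rlE
  | succ n ih => exact rl_mul_le_one h hu ih

lemma rl_pow_mul_le_self (h : IsPRL A) {u : A} (hu : rlLe u rlE) (q : ℕ) (b : A) :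
    rlLe (rlMul (rlPow u q) b) b := by
  have := rl_mul_le_mul_right h b (rl_pow_le_one h hu q)
  rwa [h.one_mul] at this

lemma rl_pow_le_pow (h : IsPRL A) {u : A} (hu : rlLe u rlE) {n m : ℕ} (hnm : n ≤ m) :
    rlLe (rlPow u m) (rlPow u n) := by
  obtain ⟨t, rfl⟩ := Nat.exists_eq_add_of_le hnm
  rw [rlPow_add h]
  have := rl_mul_le_mul_left h (rlPow u n) (rl_pow_le_one h hu t)
  rwa [h.mul_one] at this

lemma rl_pow_step (h : IsPRL A) {u a b c : A} {p q : ℕ}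
    (h1 : rlLe (rlMul (rlPow u p) a) b) (h2 : rlLe (rlMul (rlPow u q) b) c) :
    rlLe (rlMul (rlPow u (q + p)) a) c := by
  rw [rlPow_add h, h.mul_assoc]
  exact rl_le_trans h (rl_mul_le_mul_left h _ h1) h2

lemma rl_pow_absorb (h : IsPRL A) {u a b : A} (hu : rlLe u rlE) {p q : ℕ}
    (h1 : rlLe (rlMul (rlPow u p) a) b) :
    rlLe (rlMul (rlPow u (q + p)) a) b :=
  rl_pow_step h h1 (rl_pow_mul_le_self h hu q b)

/-- centrality facts -/
lemma rl_central_pow (h : IsPRL A) {z : A} (hz : ∀ y, rlMul z y = rlMul y z) :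
    ∀ (n : ℕ) (y : A), rlMul (rlPow z n) y = rlMul y (rlPow z n) := by
  intro n
  induction n with
  | zero => intro y; show rlMul rlE y = rlMul y rlE; rw [h.one_mul, h.mul_one]
  | succ n ih =>
      intro y
      show rlMul (rlMul z (rlPow z n)) y = rlMul y (rlMul z (rlPow z n))
      rw [h.mul_assoc, ih y, ← h.mul_assoc, hz y, h.mul_assoc]

lemma rl_pow_mulk (h : IsPRL A) (u : A) (k : ℕ) :
    ∀ n : ℕ, rlPow u (n * k) = rlPow (rlPow u k) n := by
  intro n
  induction n with
  | zero => rw [Nat.zero_mul]; rfl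
  | succ n ih =>
      have : (n + 1) * k = k + n * k := by ring
      rw [this, rlPow_add h, ih]
      rfl

lemma rl_central_powk (h : IsPRL A) {u : A} {k : ℕ}
    (hc : ∀ y, rlMul (rlPow u k) y = rlMul y (rlPow u k)) (n : ℕ) (y : A) :
    rlMul (rlPow u (n * k)) y = rlMul y (rlPow u (n * k)) := by
  rw [rl_pow_mulk h u k n]
  exact rl_central_pow h hc n y

/-- the key join-of-powers estimate -/
lemma rl_join_pow_le (h : IsPRL A) {u w : A} (hu : rlLe u rlE) (hw : rlLe w rlE) :
    ∀ p q : ℕ, rlLe (rlPow (rlJoin u w) (p + q)) (rlJoin (rlPow u p) (rlPow w q)) := by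
  have huw : rlLe (rlJoin u w) rlE := rl_join_le h hu hw
  intro p
  induction p with
  | zero =>
      intro q
      rw [Nat.zero_add]
      exact rl_le_trans h (rl_pow_le_one h huw q) (rl_le_join_left h rlE (rlPow w q))
  | succ p ihp =>
      intro q
      induction q with
      | zero =>
          exact rl_le_trans h (rl_pow_le_one h huw (p + 1 + 0))
            (rl_le_join_right h (rlPow u (p + 1)) rlE)
      | succ q ihq =>
          have hexp : p + 1 + (q + 1) = (p + (q + 1)) + 1 := by omega
          rw [hexp]
          show rlLe (rlMul (rlJoin u w) (rlPow (rlJoin u w) (p + (q + 1)))) _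
          apply rl_mul_join_le h
          · -- u * (u∨w)^(p+q+1) ≤ u^(p+1) ∨ w^(q+1)
            apply rl_le_trans h (rl_mul_le_mul_left h u (ihp (q + 1)))
            apply rl_mul_join_le' h
            · exact rl_le_join_left h _ _
            · have h1 : rlLe (rlMul u (rlPow w (q + 1))) (rlPow w (q + 1)) := by
                have := rl_mul_le_mul_right h (rlPow w (q + 1)) hu
                rwa [h.one_mul] at this
              exact rl_le_trans h h1 (rl_le_join_right h _ _)
          · -- w * (u∨w)^((p+1)+q) ≤ u^(p+1) ∨ w^(q+1)
            have hexp2 : p + (q + 1) = (p + 1) + q := by omega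
            rw [hexp2]
            apply rl_le_trans h (rl_mul_le_mul_left h w ihq)
            apply rl_mul_join_le' h
            · have h1 : rlLe (rlMul w (rlPow u (p + 1))) (rlPow u (p + 1)) := by
                have := rl_mul_le_mul_right h (rlPow u (p + 1)) hw
                rwa [h.one_mul] at this
              exact rl_le_trans h h1 (rl_le_join_left h _ _)
            · exact rl_le_join_right h _ _

end AuxRL

section AuxCong

variable {A : Type u} [RLLang.{u}.Structure A]

lemma cong_binop (θ : Congruence RLLang A) (f : RLFunc.{u} 2) {x₁ x₂ y₁ y₂ : A}
    (h₁ : θ.rel x₁ y₁) (h₂ : θ.rel x₂ y₂) :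
    θ.rel (funMap (L := RLLang) f ![x₁, x₂]) (funMap (L := RLLang) f ![y₁, y₂]) :=
  θ.compat 2 f ![x₁, x₂] ![y₁, y₂] (by
    intro i
    fin_cases i <;> simpa)

lemma cong_mul (θ : Congruence RLLang A) {x₁ x₂ y₁ y₂ : A}
    (h₁ : θ.rel x₁ y₁) (h₂ : θ.rel x₂ y₂) : θ.rel (rlMul x₁ x₂) (rlMul y₁ y₂) :=
  cong_binop θ RLFunc.mul h₁ h₂

lemma cong_meet (θ : Congruence RLLang A) {x₁ x₂ y₁ y₂ : A}
    (h₁ : θ.rel x₁ y₁) (h₂ : θ.rel x₂ y₂) : θ.rel (rlMeet x₁ x₂) (rlMeet y₁ y₂) :=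
  cong_binop θ RLFunc.meet h₁ h₂

lemma cong_join (θ : Congruence RLLang A) {x₁ x₂ y₁ y₂ : A}
    (h₁ : θ.rel x₁ y₁) (h₂ : θ.rel x₂ y₂) : θ.rel (rlJoin x₁ x₂) (rlJoin y₁ y₂) :=
  cong_binop θ RLFunc.join h₁ h₂

lemma cong_ldiv (θ : Congruence RLLang A) {x₁ x₂ y₁ y₂ : A}
    (h₁ : θ.rel x₁ y₁) (h₂ : θ.rel x₂ y₂) : θ.rel (rlLdiv x₁ x₂) (rlLdiv y₁ y₂) :=
  cong_binop θ RLFunc.ldiv h₁ h₂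

/-- If `θ` relates `e` to `u` and `uⁿ·a ≤ b`, `uⁿ·b ≤ a`, then `θ` relates `a` and `b`. -/
lemma cong_of_pow (h : IsPRL A) (θ : Congruence RLLang A) {u a b : A}
    (hθ : θ.rel rlE u) (n : ℕ)
    (h1 : rlLe (rlMul (rlPow u n) a) b) (h2 : rlLe (rlMul (rlPow u n) b) a) :
    θ.rel a b := by
  have hpow : θ.rel rlE (rlPow u n) := by
    clear h1 h2
    induction n with
    | zero => exact θ.refl rlE
    | succ n ih =>
        have := cong_mul θ hθ ih
        rwa [h.one_mul] at this
  have ha : θ.rel a (rlMul (rlPow u n) a) := by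
    have := cong_mul θ hpow (θ.refl a)
    rwa [h.one_mul] at this
  have hb : θ.rel b (rlMul (rlPow u n) b) := by
    have := cong_mul θ hpow (θ.refl b)
    rwa [h.one_mul] at this
  have hma : θ.rel (rlMeet (rlMul (rlPow u n) a) b) (rlMeet a b) :=
    cong_meet θ (θ.symm _ _ ha) (θ.refl b)
  have h1' : rlMeet (rlMul (rlPow u n) a) b = rlMul (rlPow u n) a := h1
  rw [h1'] at hma
  have hA : θ.rel a (rlMeet a b) := θ.trans _ _ _ ha hma
  have hmb : θ.rel (rlMeet (rlMul (rlPow u n) b) a) (rlMeet b a) :=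
    cong_meet θ (θ.symm _ _ hb) (θ.refl a)
  have h2' : rlMeet (rlMul (rlPow u n) b) a = rlMul (rlPow u n) b := h2
  rw [h2', h.meet_comm b a] at hmb
  have hB : θ.rel b (rlMeet a b) := θ.trans _ _ _ hb hmb
  exact θ.trans _ _ _ hA (θ.symm _ _ hB)

/-- From `θ.rel b₁ b₂` we get `θ.rel e (b₁ ≡ b₂)`. -/
lemma cong_equiv_of_rel (h : IsPRL A) (θ : Congruence RLLang A) {b₁ b₂ : A}
    (hb : θ.rel b₁ b₂) : θ.rel rlE (rlEquiv b₁ b₂) := by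
  have h1 : θ.rel (rlLdiv b₁ b₁) (rlLdiv b₁ b₂) := cong_ldiv θ (θ.refl b₁) hb
  have h2 : θ.rel (rlLdiv b₁ b₁) (rlLdiv b₂ b₁) := cong_ldiv θ hb (θ.refl b₁)
  have h3 := cong_meet θ (cong_meet θ h1 h2) (θ.refl rlE)
  have hself : rlMeet rlE (rlLdiv b₁ b₁) = rlE := rl_one_le_ldiv_self h b₁
  rw [rl_meet_idem h (rlLdiv b₁ b₁), h.meet_comm (rlLdiv b₁ b₁) rlE, hself] at h3
  exact h3

/-- From `θ.rel e (b₁ ≡ b₂)` we get `θ.rel b₁ b₂`. -/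
lemma rel_of_cong_equiv (h : IsPRL A) (θ : Congruence RLLang A) {b₁ b₂ : A}
    (he : θ.rel rlE (rlEquiv b₁ b₂)) : θ.rel b₁ b₂ := by
  set u := rlEquiv b₁ b₂ with hud
  have hu1 : rlLe u (rlLdiv b₁ b₂) :=
    rl_le_trans h (rl_meet_le_left h _ _) (rl_meet_le_left h _ _)
  have hu2 : rlLe u (rlLdiv b₂ b₁) :=
    rl_le_trans h (rl_meet_le_left h _ _) (rl_meet_le_right h _ _)
  have h1 : rlLe (rlMul b₁ u) b₂ := (h.ldiv_resid b₁ u b₂).mp hu1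
  have h2 : rlLe (rlMul b₂ u) b₁ := (h.ldiv_resid b₂ u b₁).mp hu2
  have ha : θ.rel b₁ (rlMul b₁ u) := by
    have := cong_mul θ (θ.refl b₁) he
    rwa [h.mul_one] at this
  have hb : θ.rel b₂ (rlMul b₂ u) := by
    have := cong_mul θ (θ.refl b₂) he
    rwa [h.mul_one] at this
  have hma : θ.rel (rlMeet (rlMul b₁ u) b₂) (rlMeet b₁ b₂) :=
    cong_meet θ (θ.symm _ _ ha) (θ.refl b₂)
  have h1' : rlMeet (rlMul b₁ u) b₂ = rlMul b₁ u := h1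
  rw [h1'] at hma
  have hA : θ.rel b₁ (rlMeet b₁ b₂) := θ.trans _ _ _ ha hma
  have hmb : θ.rel (rlMeet (rlMul b₂ u) b₁) (rlMeet b₂ b₁) :=
    cong_meet θ (θ.symm _ _ hb) (θ.refl b₁)
  have h2' : rlMeet (rlMul b₂ u) b₁ = rlMul b₂ u := h2
  rw [h2', h.meet_comm b₂ b₁] at hmb
  have hB : θ.rel b₂ (rlMeet b₁ b₂) := θ.trans _ _ _ hb hmb
  exact θ.trans _ _ _ hA (θ.symm _ _ hB)

lemma rl_equiv_le_one (h : IsPRL A) (x y : A) : rlLe (rlEquiv x y) rlE :=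
  rl_meet_le_right h _ _

/-- `Cg(b₁,b₂) = Cg(e, b₁ ≡ b₂)` at the level of relations. -/
lemma principal_shift (h : IsPRL A) (b₁ b₂ a₁ a₂ : A) :
    (principalCong RLLang A b₁ b₂).rel a₁ a₂ ↔
      (principalCong RLLang A rlE (rlEquiv b₁ b₂)).rel a₁ a₂ := by
  constructor
  · intro H θ hθ
    apply H
    intro p hp
    rw [Set.mem_singleton_iff] at hp
    subst hp
    exact rel_of_cong_equiv h θ (hθ (rlE, rlEquiv b₁ b₂) rfl)
  · intro H θ hθ
    apply H
    intro p hp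
    rw [Set.mem_singleton_iff] at hp
    subst hp
    exact cong_equiv_of_rel h θ (hθ (b₁, b₂) rfl)

end AuxCong

section NegCong

variable {A : Type u} [RLLang.{u}.Structure A]

/-- The relation `∃ n, u^{nk}·a ≤ b ∧ u^{nk}·b ≤ a`. -/
def nrel (u : A) (k : ℕ) (a b : A) : Prop :=
  ∃ n : ℕ, rlLe (rlMul (rlPow u (n * k)) a) b ∧ rlLe (rlMul (rlPow u (n * k)) b) a

lemma nrel_refl (h : IsPRL A) (u : A) (k : ℕ) (a : A) : nrel u k a a := by
  refine ⟨0, ?_, ?_⟩ <;>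
    · rw [Nat.zero_mul]
      show rlLe (rlMul rlE a) a
      rw [h.one_mul]
      exact rl_le_refl h a

lemma nrel_symm {u : A} {k : ℕ} {a b : A} (hab : nrel u k a b) : nrel u k b a := by
  obtain ⟨n, h1, h2⟩ := hab
  exact ⟨n, h2, h1⟩

lemma nrel_trans (h : IsPRL A) {u : A} {k : ℕ} {a b c : A}
    (hab : nrel u k a b) (hbc : nrel u k b c) : nrel u k a c := by
  obtain ⟨n, hn1, hn2⟩ := hab
  obtain ⟨m, hm1, hm2⟩ := hbc
  refine ⟨n + m, ?_, ?_⟩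
  · rw [show (n + m) * k = m * k + n * k by ring]
    exact rl_pow_step h hn1 hm1
  · rw [show (n + m) * k = n * k + m * k by ring]
    exact rl_pow_step h hm2 hn2

section NrelOps

lemma nrel_mul_aux (h : IsPRL A) {u : A} {k : ℕ} (hc : ∀ y, rlMul (rlPow u k) y = rlMul y (rlPow u k)) {n m : ℕ} {a b c d : A}
    (h1 : rlLe (rlMul (rlPow u (n * k)) a) b) (h2 : rlLe (rlMul (rlPow u (m * k)) c) d) :
    rlLe (rlMul (rlPow u ((n + m) * k)) (rlMul a c)) (rlMul b d) := by
  have e1 : rlMul (rlPow u ((n + m) * k)) (rlMul a c)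
      = rlMul (rlMul (rlPow u (n * k)) a) (rlMul (rlPow u (m * k)) c) := by
    rw [show (n + m) * k = n * k + m * k by ring, rlPow_add h, h.mul_assoc,
      ← h.mul_assoc (rlPow u (m * k)) a c, rl_central_powk h hc m a,
      h.mul_assoc a (rlPow u (m * k)) c, ← h.mul_assoc (rlPow u (n * k)) a]
  rw [e1]
  exact rl_mul_le_mul h h1 h2

lemma nrel_meet_aux (h : IsPRL A) {u : A} {k : ℕ} (hu : rlLe u rlE) {n m : ℕ} {a b c d : A}
    (h1 : rlLe (rlMul (rlPow u (n * k)) a) b) (h2 : rlLe (rlMul (rlPow u (m * k)) c) d) :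
    rlLe (rlMul (rlPow u ((n + m) * k)) (rlMeet a c)) (rlMeet b d) := by
  have hb : rlLe (rlMul (rlPow u ((n + m) * k)) a) b := by
    rw [show (n + m) * k = m * k + n * k by ring]
    exact rl_pow_absorb h hu h1
  have hd : rlLe (rlMul (rlPow u ((n + m) * k)) c) d := by
    rw [show (n + m) * k = n * k + m * k by ring]
    exact rl_pow_absorb h hu h2
  exact rl_le_meet h
    (rl_le_trans h (rl_mul_le_mul_left h _ (rl_meet_le_left h a c)) hb)
    (rl_le_trans h (rl_mul_le_mul_left h _ (rl_meet_le_right h a c)) hd)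

lemma nrel_join_aux (h : IsPRL A) {u : A} {k : ℕ} (hu : rlLe u rlE) {n m : ℕ} {a b c d : A}
    (h1 : rlLe (rlMul (rlPow u (n * k)) a) b) (h2 : rlLe (rlMul (rlPow u (m * k)) c) d) :
    rlLe (rlMul (rlPow u ((n + m) * k)) (rlJoin a c)) (rlJoin b d) := by
  have hb : rlLe (rlMul (rlPow u ((n + m) * k)) a) b := by
    rw [show (n + m) * k = m * k + n * k by ring]
    exact rl_pow_absorb h hu h1
  have hd : rlLe (rlMul (rlPow u ((n + m) * k)) c) d := by
    rw [show (n + m) * k = n * k + m * k by ring]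
    exact rl_pow_absorb h hu h2
  exact rl_mul_join_le' h
    (rl_le_trans h hb (rl_le_join_left h b d))
    (rl_le_trans h hd (rl_le_join_right h b d))

lemma nrel_ldiv_aux (h : IsPRL A) {u : A} {k : ℕ} (hc : ∀ y, rlMul (rlPow u k) y = rlMul y (rlPow u k)) {n m : ℕ} {a b c d : A}
    (h1 : rlLe (rlMul (rlPow u (n * k)) b) a) (h2 : rlLe (rlMul (rlPow u (m * k)) c) d) :
    rlLe (rlMul (rlPow u ((n + m) * k)) (rlLdiv a c)) (rlLdiv b d) := by
  refine (h.ldiv_resid b _ d).mpr ?_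
  have eq : rlMul b (rlMul (rlPow u ((n + m) * k)) (rlLdiv a c))
      = rlMul (rlPow u (m * k)) (rlMul (rlMul (rlPow u (n * k)) b) (rlLdiv a c)) := by
    rw [← h.mul_assoc, ← rl_central_powk h hc (n + m) b,
      show (n + m) * k = m * k + n * k by ring, rlPow_add h,
      h.mul_assoc (rlPow u (m * k)) (rlPow u (n * k)) b, h.mul_assoc]
  rw [eq]
  apply rl_le_trans h (rl_mul_le_mul_left h _ (rl_mul_le_mul_right h _ h1))
  exact rl_le_trans h (rl_mul_le_mul_left h _ (rl_mul_ldiv_le h a c)) h2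

lemma nrel_rdiv_aux (h : IsPRL A) {u : A} {k : ℕ} (hc : ∀ y, rlMul (rlPow u k) y = rlMul y (rlPow u k)) {n m : ℕ} {a b c d : A}
    (h1 : rlLe (rlMul (rlPow u (n * k)) b) a) (h2 : rlLe (rlMul (rlPow u (m * k)) c) d) :
    rlLe (rlMul (rlPow u ((n + m) * k)) (rlRdiv c a)) (rlRdiv d b) := by
  refine (h.rdiv_resid _ b d).mp ?_
  have eq : rlMul (rlMul (rlPow u ((n + m) * k)) (rlRdiv c a)) b
      = rlMul (rlMul (rlPow u (m * k)) (rlRdiv c a)) (rlMul (rlPow u (n * k)) b) := by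
    rw [show (n + m) * k = m * k + n * k by ring, rlPow_add h,
      h.mul_assoc (rlPow u (m * k)) (rlPow u (n * k)) (rlRdiv c a),
      rl_central_powk h hc n (rlRdiv c a),
      ← h.mul_assoc (rlPow u (m * k)), h.mul_assoc]
  rw [eq]
  apply rl_le_trans h (rl_mul_le_mul_left h _ h1)
  rw [h.mul_assoc]
  exact rl_le_trans h (rl_mul_le_mul_left h _ (rl_rdiv_mul_le h a c)) h2

end NrelOps

/-- The congruence `{(a,b) | ∃ n, u^{nk}·a ≤ b ∧ u^{nk}·b ≤ a}` for negative `u` with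
central `k`-th power. -/
def negCong (h : IsPRL A) (k : ℕ) (u : A) (hu : rlLe u rlE)
    (hc : ∀ y, rlMul (rlPow u k) y = rlMul y (rlPow u k)) : Congruence RLLang A where
  rel := nrel u k
  refl a := nrel_refl h u k a
  symm _ _ := nrel_symm
  trans _ _ _ := nrel_trans h
  compat n f x y hxy := by
    cases f with
    | meet =>
        obtain ⟨nn, hn1, hn2⟩ := hxy 0
        obtain ⟨mm, hm1, hm2⟩ := hxy 1
        have ex : x = ![x 0, x 1] := by funext i; fin_cases i <;> rfl
        have ey : y = ![y 0, y 1] := by funext i; fin_cases i <;> rfl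
        rw [ex, ey]
        exact ⟨nn + mm, nrel_meet_aux h hu hn1 hm1, nrel_meet_aux h hu hn2 hm2⟩
    | join =>
        obtain ⟨nn, hn1, hn2⟩ := hxy 0
        obtain ⟨mm, hm1, hm2⟩ := hxy 1
        have ex : x = ![x 0, x 1] := by funext i; fin_cases i <;> rfl
        have ey : y = ![y 0, y 1] := by funext i; fin_cases i <;> rfl
        rw [ex, ey]
        exact ⟨nn + mm, nrel_join_aux h hu hn1 hm1, nrel_join_aux h hu hn2 hm2⟩
    | mul =>
        obtain ⟨nn, hn1, hn2⟩ := hxy 0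
        obtain ⟨mm, hm1, hm2⟩ := hxy 1
        have ex : x = ![x 0, x 1] := by funext i; fin_cases i <;> rfl
        have ey : y = ![y 0, y 1] := by funext i; fin_cases i <;> rfl
        rw [ex, ey]
        exact ⟨nn + mm, nrel_mul_aux h hc hn1 hm1, nrel_mul_aux h hc hn2 hm2⟩
    | ldiv =>
        obtain ⟨nn, hn1, hn2⟩ := hxy 0
        obtain ⟨mm, hm1, hm2⟩ := hxy 1
        have ex : x = ![x 0, x 1] := by funext i; fin_cases i <;> rfl
        have ey : y = ![y 0, y 1] := by funext i; fin_cases i <;> rfl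
        rw [ex, ey]
        exact ⟨nn + mm, nrel_ldiv_aux h hc hn2 hm1, nrel_ldiv_aux h hc hn1 hm2⟩
    | rdiv =>
        obtain ⟨nn, hn1, hn2⟩ := hxy 0
        obtain ⟨mm, hm1, hm2⟩ := hxy 1
        have ex : x = ![x 0, x 1] := by funext i; fin_cases i <;> rfl
        have ey : y = ![y 0, y 1] := by funext i; fin_cases i <;> rfl
        rw [ex, ey]
        exact ⟨mm + nn, nrel_rdiv_aux h hc hm2 hn1, nrel_rdiv_aux h hc hm1 hn2⟩
    | unit =>
        have exy : x = y := funext fun i => i.elim0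
        rw [exy]
        exact nrel_refl h u k _
    | zero =>
        have exy : x = y := funext fun i => i.elim0
        rw [exy]
        exact nrel_refl h u k _

lemma negCong_gen (h : IsPRL A) {k : ℕ} (hk : 0 < k) (u : A) (hu : rlLe u rlE)
    (hc : ∀ y, rlMul (rlPow u k) y = rlMul y (rlPow u k)) :
    (negCong h k u hu hc).rel rlE u := by
  have hpow1 : rlPow u 1 = u := h.mul_one u
  refine ⟨1, ?_, ?_⟩
  · rw [Nat.one_mul]
    show rlLe (rlMul (rlPow u k) rlE) u
    rw [h.mul_one]
    have := rl_pow_le_pow h hu (hk : 1 ≤ k)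
    rwa [hpow1] at this
  · rw [Nat.one_mul]
    show rlLe (rlMul (rlPow u k) u) rlE
    exact rl_mul_le_one h (rl_pow_le_one h hu k) hu

end NegCong

section CoreInter

variable {A : Type u} [RLLang.{u}.Structure A]

/-- Core lemma: for negative `u, w`, the intersection of `Cg(e,u)` and `Cg(e,w)` is
`Cg(e, u ∨ w)`. -/
lemma core_inter (h : IsPRL A) {k : ℕ} (hk : 0 < k)
    (hham : ∀ x y : A, rlMul (rlPow (rlMeet x rlE) k) y = rlMul y (rlPow (rlMeet x rlE) k))
    {u w : A} (hu : rlLe u rlE) (hw : rlLe w rlE) (a b : A) :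
    ((principalCong RLLang A rlE u).rel a b ∧ (principalCong RLLang A rlE w).rel a b) ↔
      (principalCong RLLang A rlE (rlJoin u w)).rel a b := by
  have hcu : ∀ y, rlMul (rlPow u k) y = rlMul y (rlPow u k) := by
    intro y
    have := hham u y
    rwa [show rlMeet u rlE = u from hu] at this
  have hcw : ∀ y, rlMul (rlPow w k) y = rlMul y (rlPow w k) := by
    intro y
    have := hham w y
    rwa [show rlMeet w rlE = w from hw] at this
  have huw : rlLe (rlJoin u w) rlE := rl_join_le h hu hw
  constructor
  · rintro ⟨H1, H2⟩
    obtain ⟨n, hn1, hn2⟩ := H1 (negCong h k u hu hcu) (by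
      intro p hp
      rw [Set.mem_singleton_iff] at hp
      subst hp
      exact negCong_gen h hk u hu hcu)
    obtain ⟨m, hm1, hm2⟩ := H2 (negCong h k w hw hcw) (by
      intro p hp
      rw [Set.mem_singleton_iff] at hp
      subst hp
      exact negCong_gen h hk w hw hcw)
    have hj : rlLe (rlPow (rlJoin u w) (n * k + m * k))
        (rlJoin (rlPow u (n * k)) (rlPow w (m * k))) :=
      rl_join_pow_le h hu hw (n * k) (m * k)
    have key1 : rlLe (rlMul (rlPow (rlJoin u w) (n * k + m * k)) a) b :=
      rl_le_trans h (rl_mul_le_mul_right h a hj) (rl_mul_join_le h hn1 hm1)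
    have key2 : rlLe (rlMul (rlPow (rlJoin u w) (n * k + m * k)) b) a :=
      rl_le_trans h (rl_mul_le_mul_right h b hj) (rl_mul_join_le h hn2 hm2)
    intro θ hθ
    have hθ' : θ.rel rlE (rlJoin u w) := hθ (rlE, rlJoin u w) rfl
    exact cong_of_pow h θ hθ' (n * k + m * k) key1 key2
  · intro H
    constructor
    · intro θ hθ
      apply H
      intro p hp
      rw [Set.mem_singleton_iff] at hp
      subst hp
      have h1 : θ.rel rlE u := hθ (rlE, u) rfl
      have := cong_join θ h1 (θ.refl w)
      rwa [show rlJoin rlE w = rlE by rw [h.join_comm]; exact rl_join_of_le h hw] at this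
    · intro θ hθ
      apply H
      intro p hp
      rw [Set.mem_singleton_iff] at hp
      subst hp
      have h1 : θ.rel rlE w := hθ (rlE, w) rfl
      have := cong_join θ (θ.refl u) h1
      rwa [show rlJoin u rlE = rlE from rl_join_of_le h hu] at this

/-- Every finitely generated congruence is a principal congruence `Cg(e, d)` with `d ≤ e`. -/
lemma congGen_finite (h : IsPRL A) {s : Set (A × A)} (hs : s.Finite) :
    ∃ d : A, rlLe d rlE ∧ ∀ a b : A,
      (congGen RLLang A s).rel a b ↔ (principalCong RLLang A rlE d).rel a b := by
  refine Set.Finite.induction_on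
    (motive := fun t _ => ∃ d : A, rlLe d rlE ∧ ∀ a b : A,
      (congGen RLLang A t).rel a b ↔ (principalCong RLLang A rlE d).rel a b)
    s hs ?_ ?_
  ·
      refine ⟨rlE, rl_le_refl h rlE, fun a b => ⟨?_, ?_⟩⟩
      · intro H θ _
        exact H θ (fun p hp => absurd hp (Set.notMem_empty p))
      · intro H θ _
        refine H θ (fun p hp => ?_)
        rw [Set.mem_singleton_iff] at hp
        subst hp
        exact θ.refl rlE
  · intro q s hqs hsf IH
    obtain ⟨d, hd, hiff⟩ := IH
    set x := rlEquiv q.1 q.2 with hx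
    have hxle : rlLe x rlE := rl_equiv_le_one h q.1 q.2
    refine ⟨rlMeet x d, rl_le_trans h (rl_meet_le_right h x d) hd, fun a b => ⟨?_, ?_⟩⟩
    · intro H θ hθ
      have hθ' : θ.rel rlE (rlMeet x d) := hθ (rlE, rlMeet x d) rfl
      have hθx : θ.rel rlE x := by
        have h1 := cong_join θ (θ.refl x) (θ.symm _ _ hθ')
        rw [h.absorb₂ x d, rl_join_of_le h hxle] at h1
        exact θ.symm _ _ h1
      have hθd : θ.rel rlE d := by
        have h1 := cong_join θ (θ.refl d) (θ.symm _ _ hθ')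
        rw [h.meet_comm x d, h.absorb₂ d x, rl_join_of_le h hd] at h1
        exact θ.symm _ _ h1
      apply H
      intro p hp
      rcases Set.mem_insert_iff.mp hp with hp | hp
      · subst hp
        exact rel_of_cong_equiv h θ hθx
      · have hgen : (congGen RLLang A s).rel p.1 p.2 := fun ψ hψ => hψ p hp
        exact (hiff p.1 p.2).mp hgen θ (fun r hr => by
          rw [Set.mem_singleton_iff] at hr
          subst hr
          exact hθd)
    · intro H θ hθ
      have hθx : θ.rel rlE x :=
        cong_equiv_of_rel h θ (hθ q (Set.mem_insert q s))
      have hθd : θ.rel rlE d := by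
        have hgen : (principalCong RLLang A rlE d).rel rlE d :=
          fun ψ hψ => hψ (rlE, d) rfl
        exact (hiff rlE d).mpr hgen θ (fun r hr => hθ r (Set.mem_insert_of_mem q hr))
      have hmeet := cong_meet θ hθx hθd
      rw [rl_meet_idem h rlE] at hmeet
      refine H θ (fun r hr => ?_)
      rw [Set.mem_singleton_iff] at hr
      subst hr
      exact hmeet

end CoreInter
/-- Lemma 6.3. Let `V` be a Hamiltonian variety of pointed residuated
lattices. Then `V` has the compact intersection property; indeed, for every `A ∈ V` and all
`b₁, b₂, c₁, c₂ ∈ A`, the intersection of the principal congruences generated by `(b₁, b₂)` and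
by `(c₁, c₂)` equals the principal congruence generated by `(e, (b₁≡b₂) ∨ (c₁≡c₂))`. -/
theorem hasCIP_of_hamiltonian (V : Set (Alg RLLang.{u})) (hV : IsVariety V)
    (hPRL : ∀ A ∈ V, IsPRL A.carrier) (hHam : Hamiltonian V) :
    HasCIP V ∧
      ∀ A ∈ V, ∀ b₁ b₂ c₁ c₂ a₁ a₂ : A.carrier,
        (infCong (principalCong RLLang A.carrier b₁ b₂)
            (principalCong RLLang A.carrier c₁ c₂)).rel a₁ a₂ ↔
          (principalCong RLLang A.carrier rlE
              (rlJoin (rlEquiv b₁ b₂) (rlEquiv c₁ c₂))).rel a₁ a₂ := by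
  obtain ⟨k, hk, hhamV⟩ := hHam
  have main : ∀ A ∈ V, ∀ b₁ b₂ c₁ c₂ a₁ a₂ : A.carrier,
      (infCong (principalCong RLLang A.carrier b₁ b₂)
          (principalCong RLLang A.carrier c₁ c₂)).rel a₁ a₂ ↔
        (principalCong RLLang A.carrier rlE
            (rlJoin (rlEquiv b₁ b₂) (rlEquiv c₁ c₂))).rel a₁ a₂ := by
    intro A hA b₁ b₂ c₁ c₂ a₁ a₂
    have h := hPRL A hA
    have hham := hhamV A hA
    have hu := rl_equiv_le_one h b₁ b₂
    have hw := rl_equiv_le_one h c₁ c₂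
    show ((principalCong RLLang A.carrier b₁ b₂).rel a₁ a₂ ∧
        (principalCong RLLang A.carrier c₁ c₂).rel a₁ a₂) ↔ _
    rw [principal_shift h b₁ b₂ a₁ a₂, principal_shift h c₁ c₂ a₁ a₂]
    exact core_inter h hk hham hu hw a₁ a₂
  refine ⟨?_, main⟩
  intro A hA θ₁ θ₂ hc₁ hc₂
  have h := hPRL A hA
  have hham := hhamV A hA
  obtain ⟨s₁, hs₁f, hs₁⟩ := hc₁
  obtain ⟨s₂, hs₂f, hs₂⟩ := hc₂
  obtain ⟨d₁, hd₁, hiff₁⟩ := congGen_finite h hs₁f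
  obtain ⟨d₂, hd₂, hiff₂⟩ := congGen_finite h hs₂f
  refine ⟨{(rlE, rlJoin d₁ d₂)}, Set.finite_singleton _, fun a b => ?_⟩
  show (θ₁.rel a b ∧ θ₂.rel a b) ↔ _
  rw [hs₁ a b, hs₂ a b, hiff₁ a b, hiff₂ a b]
  exact core_inter h hk hham hd₁ hd₂ a b

end Paper
end

section
/- Let V be a Hamiltonian variety of pointed residuated lattices. Then the conjunctions of equations γ(x₁,x₂,y₁,y₂,z) := ((x₁≡x₂) ≤ z) & ((y₁≡y₂) ∨ z ≈ e) and φ(x₁,x₂,y₁,y₂,z) := (z ≈ e) witness a guarded deduction theorem for V; in particular, V has a guarded deduction theorem. -/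
namespace Paper

open FirstOrder FirstOrder.Language FirstOrder.Language.Structure

universe u

variable {L : FirstOrder.Language.{u, u}}

section GuardedTerms

open FirstOrder.Language

/-- Term-level meet. -/
def tMeet {α : Type} (s t : RLLang.{u}.Term α) : RLLang.{u}.Term α :=
  Term.func RLFunc.meet ![s, t]

/-- Term-level join. -/
def tJoin {α : Type} (s t : RLLang.{u}.Term α) : RLLang.{u}.Term α :=
  Term.func RLFunc.join ![s, t]

/-- Term-level left residual. -/
def tLdiv {α : Type} (s t : RLLang.{u}.Term α) : RLLang.{u}.Term α :=
  Term.func RLFunc.ldiv ![s, t]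

/-- The term `e`. -/
def tE {α : Type} : RLLang.{u}.Term α := Term.func RLFunc.unit ![]

/-- The term `s ≡ t := (s\t) ∧ (t\s) ∧ e`. -/
def tEquiv {α : Type} (s t : RLLang.{u}.Term α) : RLLang.{u}.Term α :=
  tMeet (tMeet (tLdiv s t) (tLdiv t s)) tE

/-- The variables `x₁, x₂, y₁, y₂, z` (the last one is the single parameter variable). -/
def vx₁ : RLLang.{u}.Term (Fin 4 ⊕ Fin 1) := Term.var (Sum.inl 0)
def vx₂ : RLLang.{u}.Term (Fin 4 ⊕ Fin 1) := Term.var (Sum.inl 1)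
def vy₁ : RLLang.{u}.Term (Fin 4 ⊕ Fin 1) := Term.var (Sum.inl 2)
def vy₂ : RLLang.{u}.Term (Fin 4 ⊕ Fin 1) := Term.var (Sum.inl 3)
def vz : RLLang.{u}.Term (Fin 4 ⊕ Fin 1) := Term.var (Sum.inr 0)

/-- The guard `γ := ((x₁≡x₂) ≤ z) & ((y₁≡y₂) ∨ z ≈ e)`, where `s ≤ t` abbreviates the
equation `s ∧ t ≈ s`. -/
def γPRL : List (RLLang.{u}.Term (Fin 4 ⊕ Fin 1) × RLLang.{u}.Term (Fin 4 ⊕ Fin 1)) :=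
  [(tMeet (tEquiv vx₁ vx₂) vz, tEquiv vx₁ vx₂), (tJoin (tEquiv vy₁ vy₂) vz, tE)]

/-- The conclusion `φ := (z ≈ e)`. -/
def φPRL : List (RLLang.{u}.Term (Fin 4 ⊕ Fin 1) × RLLang.{u}.Term (Fin 4 ⊕ Fin 1)) :=
  [(vz, tE)]

end GuardedTerms
section PRLFacts

variable {A : Type u} [RLLang.{u}.Structure A]

namespace IsPRL

variable (h : IsPRL A)
include h

lemma meet_self (a : A) : rlMeet a a = a := by
  nth_rewrite 2 [← h.absorb₂ a a]
  exact h.absorb₁ a _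

lemma join_self (a : A) : rlJoin a a = a := by
  nth_rewrite 2 [← h.absorb₁ a a]
  exact h.absorb₂ a _

lemma le_refl (a : A) : rlLe a a := h.meet_self a

lemma le_antisymm {a b : A} (hab : rlLe a b) (hba : rlLe b a) : a = b := by
  unfold rlLe at hab hba
  rw [← hab, h.meet_comm, hba]

lemma le_trans {a b c : A} (hab : rlLe a b) (hbc : rlLe b c) : rlLe a c := by
  unfold rlLe at *
  rw [← hab, h.meet_assoc, hbc]

lemma meet_le_left (a b : A) : rlLe (rlMeet a b) a := by
  unfold rlLe
  rw [h.meet_comm (rlMeet a b) a, ← h.meet_assoc, h.meet_self]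

lemma meet_le_right (a b : A) : rlLe (rlMeet a b) b := by
  unfold rlLe
  rw [h.meet_assoc, h.meet_self]

lemma le_meet {a b c : A} (hab : rlLe a b) (hac : rlLe a c) : rlLe a (rlMeet b c) := by
  unfold rlLe at *
  rw [← h.meet_assoc, hab, hac]

lemma join_eq_of_le {a b : A} (hab : rlLe a b) : rlJoin a b = b := by
  unfold rlLe at hab
  rw [← hab, h.join_comm, h.meet_comm, h.absorb₂]

lemma le_of_join_eq {a b : A} (hab : rlJoin a b = b) : rlLe a b := by
  unfold rlLe
  rw [← hab, h.absorb₁]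

lemma le_join_left (a b : A) : rlLe a (rlJoin a b) :=
  h.le_of_join_eq (by rw [← h.join_assoc, h.join_self])

lemma le_join_right (a b : A) : rlLe b (rlJoin a b) := by
  rw [h.join_comm]; exact h.le_join_left b a

lemma join_le {a b c : A} (hac : rlLe a c) (hbc : rlLe b c) : rlLe (rlJoin a b) c := by
  apply h.le_of_join_eq
  rw [h.join_assoc, h.join_eq_of_le hbc, h.join_eq_of_le hac]

/-! residuation facts -/

lemma mul_ldiv_le (a b : A) : rlLe (rlMul a (rlLdiv a b)) b :=
  (h.ldiv_resid a (rlLdiv a b) b).mp (h.le_refl _)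

lemma rdiv_mul_le (a b : A) : rlLe (rlMul (rlRdiv a b) b) a :=
  (h.rdiv_resid (rlRdiv a b) b a).mpr (h.le_refl _)

lemma mul_le_mul_right {a b : A} (c : A) (hab : rlLe a b) : rlLe (rlMul a c) (rlMul b c) := by
  have h1 : rlLe b (rlRdiv (rlMul b c) c) := (h.rdiv_resid b c (rlMul b c)).mp (h.le_refl _)
  have h2 : rlLe a (rlRdiv (rlMul b c) c) := h.le_trans hab h1
  exact (h.rdiv_resid a c (rlMul b c)).mpr h2

lemma mul_le_mul_left {a b : A} (c : A) (hab : rlLe a b) : rlLe (rlMul c a) (rlMul c b) := by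
  have h1 : rlLe b (rlLdiv c (rlMul c b)) := (h.ldiv_resid c b (rlMul c b)).mpr (h.le_refl _)
  have h2 : rlLe a (rlLdiv c (rlMul c b)) := h.le_trans hab h1
  exact (h.ldiv_resid c a (rlMul c b)).mp h2

lemma mul_le_mul {a b c d : A} (hab : rlLe a b) (hcd : rlLe c d) :
    rlLe (rlMul a c) (rlMul b d) :=
  h.le_trans (h.mul_le_mul_left a hcd) (h.mul_le_mul_right d hab)

lemma mul_join_le {a b c z : A} (h1 : rlLe (rlMul a b) z) (h2 : rlLe (rlMul a c) z) :
    rlLe (rlMul a (rlJoin b c)) z := by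
  refine (h.ldiv_resid a (rlJoin b c) z).mp (h.join_le ?_ ?_)
  · exact (h.ldiv_resid a b z).mpr h1
  · exact (h.ldiv_resid a c z).mpr h2

lemma join_mul_le {a b c z : A} (h1 : rlLe (rlMul b a) z) (h2 : rlLe (rlMul c a) z) :
    rlLe (rlMul (rlJoin b c) a) z := by
  refine (h.rdiv_resid (rlJoin b c) a z).mpr (h.join_le ?_ ?_)
  · exact (h.rdiv_resid b a z).mp h1
  · exact (h.rdiv_resid c a z).mp h2

/-! equivalence term facts -/

lemma equiv_le_e (a b : A) : rlLe (rlEquiv a b) rlE := h.meet_le_right _ _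

lemma le_ldiv_of {a b w : A} (hw : rlLe (rlMul a w) b) : rlLe w (rlLdiv a b) :=
  (h.ldiv_resid a w b).mpr hw

lemma le_equiv {a b w : A} (hwe : rlLe w rlE) (h1 : rlLe (rlMul a w) b)
    (h2 : rlLe (rlMul b w) a) : rlLe w (rlEquiv a b) :=
  h.le_meet (h.le_meet (h.le_ldiv_of h1) (h.le_ldiv_of h2)) hwe

lemma equiv_mul_le_left (a b : A) : rlLe (rlMul a (rlEquiv a b)) b := by
  have : rlLe (rlEquiv a b) (rlLdiv a b) := h.le_trans (h.meet_le_left _ _) (h.meet_le_left _ _)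
  exact h.le_trans (h.mul_le_mul_left a this) (h.mul_ldiv_le a b)

lemma equiv_mul_le_right (a b : A) : rlLe (rlMul b (rlEquiv a b)) a := by
  have : rlLe (rlEquiv a b) (rlLdiv b a) := h.le_trans (h.meet_le_left _ _) (h.meet_le_right _ _)
  exact h.le_trans (h.mul_le_mul_left b this) (h.mul_ldiv_le b a)

lemma equiv_self (a : A) : rlEquiv a a = rlE := by
  refine h.le_antisymm (h.equiv_le_e a a) (h.le_equiv (h.le_refl _) ?_ ?_) <;>
    · rw [h.mul_one]; exact h.le_refl a

lemma eq_of_e_le_equiv {a b : A} (hab : rlLe rlE (rlEquiv a b)) : a = b := by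
  have h1 : rlLe (rlMul a rlE) b :=
    h.le_trans (h.mul_le_mul_left a hab) (h.equiv_mul_le_left a b)
  have h2 : rlLe (rlMul b rlE) a :=
    h.le_trans (h.mul_le_mul_left b hab) (h.equiv_mul_le_right a b)
  rw [h.mul_one] at h1 h2
  exact h.le_antisymm h1 h2

/-! powers -/

lemma pow_succ' (a : A) (n : ℕ) : rlPow a (n + 1) = rlMul (rlPow a n) a := by
  induction n with
  | zero => show rlMul a rlE = rlMul rlE a; rw [h.mul_one, h.one_mul]
  | succ n ih =>
      calc rlMul a (rlPow a (n + 1)) = rlMul a (rlMul (rlPow a n) a) := by rw [ih]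
        _ = rlMul (rlMul a (rlPow a n)) a := (h.mul_assoc _ _ _).symm

lemma pow_add (a : A) (m n : ℕ) : rlPow a (m + n) = rlMul (rlPow a m) (rlPow a n) := by
  induction m with
  | zero => rw [Nat.zero_add]; show rlPow a n = rlMul rlE (rlPow a n); rw [h.one_mul]
  | succ m ih =>
      have : m + 1 + n = (m + n) + 1 := by omega
      rw [this]
      show rlMul a (rlPow a (m + n)) = rlMul (rlMul a (rlPow a m)) (rlPow a n)
      rw [ih, h.mul_assoc]

lemma pow_le_e {a : A} (ha : rlLe a rlE) (n : ℕ) : rlLe (rlPow a n) rlE := by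
  induction n with
  | zero => exact h.le_refl _
  | succ n ih =>
      show rlLe (rlMul a (rlPow a n)) rlE
      have := h.mul_le_mul ha ih
      rwa [h.mul_one] at this

/-- `w ≤ e` implies `w · x ≤ x`. -/
lemma mul_le_of_le_e {w : A} (hw : rlLe w rlE) (x : A) : rlLe (rlMul w x) x := by
  have := h.mul_le_mul_right x hw
  rwa [h.one_mul] at this

lemma mul_le_of_le_e' {w : A} (hw : rlLe w rlE) (x : A) : rlLe (rlMul x w) x := by
  have := h.mul_le_mul_left x hw
  rwa [h.mul_one] at this

lemma pow_mul (a : A) (k n : ℕ) : rlPow (rlPow a k) n = rlPow a (k * n) := by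
  induction n with
  | zero => rfl
  | succ n ih =>
      show rlMul (rlPow a k) (rlPow (rlPow a k) n) = _
      rw [ih, ← h.pow_add]
      congr 1
      ring

end IsPRL

/-- centrality -/
def RLCentral {A : Type u} [RLLang.{u}.Structure A] (w : A) : Prop := ∀ y : A, rlMul w y = rlMul y w

namespace IsPRL
variable (h : IsPRL A)
include h

lemma central_pow {w : A} (hw : RLCentral w) (n : ℕ) : RLCentral (rlPow w n) := by
  induction n with
  | zero => intro y; show rlMul rlE y = rlMul y rlE; rw [h.mul_one, h.one_mul]
  | succ n ih =>
      intro y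
      show rlMul (rlMul w (rlPow w n)) y = rlMul y (rlMul w (rlPow w n))
      rw [h.mul_assoc, ih y, ← h.mul_assoc, hw y, h.mul_assoc]

end IsPRL

end PRLFacts
section CongFacts

variable {A : Type u} [RLLang.{u}.Structure A]

namespace IsPRL

variable (h : IsPRL A)
include h

lemma shift {u x y : A} (hue : rlLe u rlE) {n : ℕ}
    (hx : rlLe (rlMul (rlPow u n) x) y) (m : ℕ) :
    rlLe (rlMul (rlPow u (n + m)) x) y := by
  have e1 : rlPow u (n + m) = rlMul (rlPow u m) (rlPow u n) := by
    rw [Nat.add_comm, h.pow_add]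
  rw [e1, h.mul_assoc]
  exact h.le_trans (h.mul_le_mul_left _ hx) (h.mul_le_of_le_e (h.pow_le_e hue m) y)

lemma trans_aux {u x y z : A} (_hue : rlLe u rlE) {n m : ℕ}
    (h1 : rlLe (rlMul (rlPow u n) x) y) (h2 : rlLe (rlMul (rlPow u m) y) z) :
    rlLe (rlMul (rlPow u (n + m)) x) z := by
  have e1 : rlPow u (n + m) = rlMul (rlPow u m) (rlPow u n) := by
    rw [Nat.add_comm, h.pow_add]
  rw [e1, h.mul_assoc]
  exact h.le_trans (h.mul_le_mul_left _ h1) h2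

lemma sq_le {w : A} (hwe : rlLe w rlE) : rlLe (rlMul w w) w := h.mul_le_of_le_e hwe w

lemma comp_meet {w x₁ x₂ y₁ y₂ : A} (hwe : rlLe w rlE)
    (h1 : rlLe (rlMul w x₁) y₁) (h2 : rlLe (rlMul w x₂) y₂) :
    rlLe (rlMul (rlMul w w) (rlMeet x₁ x₂)) (rlMeet y₁ y₂) := by
  refine h.le_trans (h.mul_le_mul_right _ (h.sq_le hwe)) (h.le_meet ?_ ?_)
  · exact h.le_trans (h.mul_le_mul_left w (h.meet_le_left x₁ x₂)) h1
  · exact h.le_trans (h.mul_le_mul_left w (h.meet_le_right x₁ x₂)) h2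

lemma comp_join {w x₁ x₂ y₁ y₂ : A} (hwe : rlLe w rlE)
    (h1 : rlLe (rlMul w x₁) y₁) (h2 : rlLe (rlMul w x₂) y₂) :
    rlLe (rlMul (rlMul w w) (rlJoin x₁ x₂)) (rlJoin y₁ y₂) := by
  refine h.le_trans (h.mul_le_mul_right _ (h.sq_le hwe)) (h.mul_join_le ?_ ?_)
  · exact h.le_trans h1 (h.le_join_left y₁ y₂)
  · exact h.le_trans h2 (h.le_join_right y₁ y₂)

lemma comp_mul {w x₁ x₂ y₁ y₂ : A} (hwc : RLCentral w)
    (h1 : rlLe (rlMul w x₁) y₁) (h2 : rlLe (rlMul w x₂) y₂) :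
    rlLe (rlMul (rlMul w w) (rlMul x₁ x₂)) (rlMul y₁ y₂) := by
  have e1 : rlMul (rlMul w w) (rlMul x₁ x₂) = rlMul (rlMul w x₁) (rlMul w x₂) :=
    calc rlMul (rlMul w w) (rlMul x₁ x₂)
        = rlMul w (rlMul w (rlMul x₁ x₂)) := h.mul_assoc _ _ _
      _ = rlMul w (rlMul (rlMul w x₁) x₂) := by rw [h.mul_assoc w x₁ x₂]
      _ = rlMul w (rlMul (rlMul x₁ w) x₂) := by rw [hwc x₁]
      _ = rlMul w (rlMul x₁ (rlMul w x₂)) := by rw [h.mul_assoc x₁ w x₂]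
      _ = rlMul (rlMul w x₁) (rlMul w x₂) := (h.mul_assoc _ _ _).symm
  rw [e1]
  exact h.mul_le_mul h1 h2

lemma comp_ldiv {w x₁ x₂ y₁ y₂ : A} (hwc : RLCentral w)
    (h1r : rlLe (rlMul w y₁) x₁) (h2 : rlLe (rlMul w x₂) y₂) :
    rlLe (rlMul (rlMul w w) (rlLdiv x₁ x₂)) (rlLdiv y₁ y₂) := by
  refine (h.ldiv_resid y₁ _ y₂).mpr ?_
  have e1 : rlMul y₁ (rlMul (rlMul w w) (rlLdiv x₁ x₂)) =
      rlMul (rlMul w y₁) (rlMul w (rlLdiv x₁ x₂)) := by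
    rw [h.mul_assoc w w, ← h.mul_assoc y₁ w, ← hwc y₁]
  rw [e1]
  have e2 : rlMul x₁ (rlMul w (rlLdiv x₁ x₂)) = rlMul w (rlMul x₁ (rlLdiv x₁ x₂)) := by
    rw [← h.mul_assoc, ← hwc x₁, h.mul_assoc]
  refine h.le_trans (h.mul_le_mul_right _ h1r) ?_
  rw [e2]
  exact h.le_trans (h.mul_le_mul_left w (h.mul_ldiv_le x₁ x₂)) h2

lemma comp_rdiv {w x₁ x₂ y₁ y₂ : A} (hwc : RLCentral w)
    (h1 : rlLe (rlMul w x₁) y₁) (h2r : rlLe (rlMul w y₂) x₂) :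
    rlLe (rlMul (rlMul w w) (rlRdiv x₁ x₂)) (rlRdiv y₁ y₂) := by
  refine (h.rdiv_resid _ y₂ y₁).mp ?_
  have e1 : rlMul (rlMul (rlMul w w) (rlRdiv x₁ x₂)) y₂ =
      rlMul w (rlMul (rlRdiv x₁ x₂) (rlMul w y₂)) := by
    rw [h.mul_assoc w w, h.mul_assoc w (rlMul w (rlRdiv x₁ x₂)) y₂, hwc (rlRdiv x₁ x₂),
      h.mul_assoc (rlRdiv x₁ x₂) w y₂]
  rw [e1]
  have i1 : rlLe (rlMul (rlRdiv x₁ x₂) (rlMul w y₂)) x₁ :=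
    h.le_trans (h.mul_le_mul_left _ h2r) (h.rdiv_mul_le x₁ x₂)
  exact h.le_trans (h.mul_le_mul_left w i1) h1

end IsPRL
end CongFacts
section HamCong

variable {A : Type u} [RLLang.{u}.Structure A]

lemma funMap_pair (f : RLLang.{u}.Functions 2) (x : Fin 2 → A) :
    funMap f x = funMap f ![x 0, x 1] := by
  congr 1
  funext i
  fin_cases i <;> rfl

lemma funMap_nullary (f : RLLang.{u}.Functions 0) (x y : Fin 0 → A) :
    funMap f x = funMap f y := by
  congr 1
  funext i
  exact i.elim0

/-- The congruence associated with a negative central element `u`. -/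
def hamCong (h : IsPRL A) (u : A) (hue : rlLe u rlE) (huc : RLCentral u) :
    Congruence RLLang A where
  rel x y := ∃ n : ℕ, rlLe (rlMul (rlPow u n) x) y ∧ rlLe (rlMul (rlPow u n) y) x
  refl a := ⟨0, by
    constructor <;> · show rlLe (rlMul rlE a) a; rw [h.one_mul]; exact h.le_refl a⟩
  symm a b := fun ⟨n, h1, h2⟩ => ⟨n, h2, h1⟩
  trans a b c := fun ⟨n, h1, h1'⟩ ⟨m, h2, h2'⟩ =>
    ⟨n + m, h.trans_aux hue h1 h2, by
      rw [Nat.add_comm]; exact h.trans_aux hue h2' h1'⟩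
  compat n f x y hxy := by
    cases f with
    | unit =>
        refine ⟨0, ?_, ?_⟩ <;>
        · rw [funMap_nullary RLFunc.unit x y]
          show rlLe (rlMul rlE _) _
          rw [h.one_mul]
          exact h.le_refl _
    | zero =>
        refine ⟨0, ?_, ?_⟩ <;>
        · rw [funMap_nullary RLFunc.zero x y]
          show rlLe (rlMul rlE _) _
          rw [h.one_mul]
          exact h.le_refl _
    | meet =>
        obtain ⟨n₁, h1a, h1b⟩ := hxy 0
        obtain ⟨n₂, h2a', h2b'⟩ := hxy 1
        have h2a := h.shift hue h2a' n₁; have h2b := h.shift hue h2b' n₁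
        rw [Nat.add_comm] at h2a h2b
        have h1a := h.shift hue h1a n₂; have h1b := h.shift hue h1b n₂
        set N := n₁ + n₂
        have hwc := h.central_pow huc N
        have hwe := h.pow_le_e hue N
        refine ⟨N + N, ?_, ?_⟩ <;>
          rw [funMap_pair RLFunc.meet x, funMap_pair RLFunc.meet y, h.pow_add]
        · exact h.comp_meet hwe h1a h2a
        · exact h.comp_meet hwe h1b h2b
    | join =>
        obtain ⟨n₁, h1a, h1b⟩ := hxy 0
        obtain ⟨n₂, h2a', h2b'⟩ := hxy 1
        have h2a := h.shift hue h2a' n₁; have h2b := h.shift hue h2b' n₁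
        rw [Nat.add_comm] at h2a h2b
        have h1a := h.shift hue h1a n₂; have h1b := h.shift hue h1b n₂
        set N := n₁ + n₂
        have hwc := h.central_pow huc N
        have hwe := h.pow_le_e hue N
        refine ⟨N + N, ?_, ?_⟩ <;>
          rw [funMap_pair RLFunc.join x, funMap_pair RLFunc.join y, h.pow_add]
        · exact h.comp_join hwe h1a h2a
        · exact h.comp_join hwe h1b h2b
    | mul =>
        obtain ⟨n₁, h1a, h1b⟩ := hxy 0
        obtain ⟨n₂, h2a', h2b'⟩ := hxy 1
        have h2a := h.shift hue h2a' n₁; have h2b := h.shift hue h2b' n₁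
        rw [Nat.add_comm] at h2a h2b
        have h1a := h.shift hue h1a n₂; have h1b := h.shift hue h1b n₂
        set N := n₁ + n₂
        have hwc := h.central_pow huc N
        have hwe := h.pow_le_e hue N
        refine ⟨N + N, ?_, ?_⟩ <;>
          rw [funMap_pair RLFunc.mul x, funMap_pair RLFunc.mul y, h.pow_add]
        · exact h.comp_mul hwc h1a h2a
        · exact h.comp_mul hwc h1b h2b
    | ldiv =>
        obtain ⟨n₁, h1a, h1b⟩ := hxy 0
        obtain ⟨n₂, h2a', h2b'⟩ := hxy 1
        have h2a := h.shift hue h2a' n₁; have h2b := h.shift hue h2b' n₁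
        rw [Nat.add_comm] at h2a h2b
        have h1a := h.shift hue h1a n₂; have h1b := h.shift hue h1b n₂
        set N := n₁ + n₂
        have hwc := h.central_pow huc N
        have hwe := h.pow_le_e hue N
        refine ⟨N + N, ?_, ?_⟩ <;>
          rw [funMap_pair RLFunc.ldiv x, funMap_pair RLFunc.ldiv y, h.pow_add]
        · exact h.comp_ldiv hwc h1b h2a
        · exact h.comp_ldiv hwc h1a h2b
    | rdiv =>
        obtain ⟨n₁, h1a, h1b⟩ := hxy 0
        obtain ⟨n₂, h2a', h2b'⟩ := hxy 1
        have h2a := h.shift hue h2a' n₁; have h2b := h.shift hue h2b' n₁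
        rw [Nat.add_comm] at h2a h2b
        have h1a := h.shift hue h1a n₂; have h1b := h.shift hue h1b n₂
        set N := n₁ + n₂
        have hwc := h.central_pow huc N
        have hwe := h.pow_le_e hue N
        refine ⟨N + N, ?_, ?_⟩ <;>
          rw [funMap_pair RLFunc.rdiv x, funMap_pair RLFunc.rdiv y, h.pow_add]
        · exact h.comp_rdiv hwc h1a h2b
        · exact h.comp_rdiv hwc h1b h2a

/-- The quotient homomorphism. -/
def quotHomRL (θ : Congruence RLLang.{u} A) : A →[RLLang.{u}] QuotAlg θ where
  toFun := Quotient.mk θ.setoid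
  map_fun' f x := by
    show _ = funMap f (fun i => Quotient.mk θ.setoid (x i))
    show _ = Quotient.mk θ.setoid (funMap f fun i => (Quotient.mk θ.setoid (x i)).out)
    apply Quotient.sound
    exact θ.compat _ f _ _ fun i =>
      θ.symm _ _ (Quotient.mk_out (s := θ.setoid) (x i))
  map_rel' r x := r.elim

lemma quotHomRL_surjective (θ : Congruence RLLang.{u} A) :
    Function.Surjective (quotHomRL θ) :=
  fun q => ⟨q.out, Quotient.out_eq q⟩

end HamCong

section RealizeHelpers

variable {α : Type} {M : Type u} [RLLang.{u}.Structure M]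

@[simp] lemma realize_tMeet (s t : RLLang.{u}.Term α) (v : α → M) :
    (tMeet s t).realize v = rlMeet (s.realize v) (t.realize v) := by
  show funMap (L := RLLang) RLFunc.meet (fun i => (![s, t] i).realize v) =
    funMap (L := RLLang) RLFunc.meet ![s.realize v, t.realize v]
  congr 1
  funext i
  fin_cases i <;> rfl

@[simp] lemma realize_tJoin (s t : RLLang.{u}.Term α) (v : α → M) :
    (tJoin s t).realize v = rlJoin (s.realize v) (t.realize v) := by
  show funMap (L := RLLang) RLFunc.join (fun i => (![s, t] i).realize v) =
    funMap (L := RLLang) RLFunc.join ![s.realize v, t.realize v]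
  congr 1
  funext i
  fin_cases i <;> rfl

@[simp] lemma realize_tLdiv (s t : RLLang.{u}.Term α) (v : α → M) :
    (tLdiv s t).realize v = rlLdiv (s.realize v) (t.realize v) := by
  show funMap (L := RLLang) RLFunc.ldiv (fun i => (![s, t] i).realize v) =
    funMap (L := RLLang) RLFunc.ldiv ![s.realize v, t.realize v]
  congr 1
  funext i
  fin_cases i <;> rfl

@[simp] lemma realize_tE (v : α → M) : (tE.realize v : M) = rlE := by
  show funMap (L := RLLang) RLFunc.unit
      (fun i : Fin 0 => Term.realize v ((![] : Fin 0 → RLLang.{u}.Term α) i)) =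
    funMap (L := RLLang) RLFunc.unit ![]
  congr 1
  funext i
  exact i.elim0

@[simp] lemma realize_tEquiv (s t : RLLang.{u}.Term α) (v : α → M) :
    (tEquiv s t).realize v = rlEquiv (s.realize v) (t.realize v) := by
  rw [tEquiv, realize_tMeet, realize_tMeet, realize_tLdiv, realize_tLdiv, realize_tE, rlEquiv]

lemma conjHolds_gamma_iff (a₁ a₂ b₁ b₂ : M) (w : Fin 1 → M) :
    ConjHolds γPRL (Sum.elim ![a₁, a₂, b₁, b₂] w) ↔
      rlMeet (rlEquiv a₁ a₂) (w 0) = rlEquiv a₁ a₂ ∧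
        rlJoin (rlEquiv b₁ b₂) (w 0) = rlE := by
  unfold γPRL ConjHolds
  rw [List.forall_mem_cons, List.forall_mem_cons]
  unfold EqHolds
  simp only [vx₁, vx₂, vy₁, vy₂, vz, realize_tMeet, realize_tJoin, realize_tEquiv,
    realize_tE, Term.realize_var, Sum.elim_inl, Sum.elim_inr, List.not_mem_nil,
    false_implies, implies_true, and_true]
  simp [Matrix.cons_val_zero, Matrix.cons_val_one]

lemma conjHolds_phi_iff (a₁ a₂ b₁ b₂ : M) (w : Fin 1 → M) :
    ConjHolds φPRL (Sum.elim ![a₁, a₂, b₁, b₂] w) ↔ w 0 = rlE := by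
  unfold φPRL ConjHolds
  rw [List.forall_mem_cons]
  unfold EqHolds
  simp only [vz, realize_tE, Term.realize_var, Sum.elim_inr, List.not_mem_nil,
    false_implies, implies_true, and_true]

end RealizeHelpers

/-- Lemma 6.4. Let `V` be a Hamiltonian variety of pointed residuated
lattices. Then the conjunctions of equations `γ := ((x₁≡x₂) ≤ z) & ((y₁≡y₂) ∨ z ≈ e)` and
`φ := (z ≈ e)` witness a guarded deduction theorem for `V`; in particular, `V` has a guarded
deduction theorem. -/
theorem guardedDT_of_hamiltonian (V : Set (Alg RLLang.{u})) (hV : IsVariety V)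
    (hPRL : ∀ A ∈ V, IsPRL A.carrier) (hHam : Hamiltonian V) :
    GuardedDTWitness V 1 γPRL φPRL ∧ GuardedDT V := by
  obtain ⟨k, hkpos, hham⟩ := hHam
  have main : GuardedDTWitness V 1 γPRL φPRL := by
    intro p s₁ s₂ t₁ t₂ π
    constructor
    · constructor
      · -- hard direction: deduction gives the guarded implication
        intro H A hA v hπ w hγ
        have h := hPRL A hA
        rw [conjHolds_gamma_iff] at hγ
        rw [conjHolds_phi_iff]
        obtain ⟨hg1, hg2⟩ := hγ
        set a₁ := s₁.realize v with ha₁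
        set a₂ := s₂.realize v with ha₂
        set b₁ := t₁.realize v with hb₁
        set b₂ := t₂.realize v with hb₂
        set c := w 0 with hc
        set d := rlEquiv b₁ b₂ with hd
        have hde : rlLe d rlE := h.equiv_le_e b₁ b₂
        have hdc : RLCentral (rlPow d k) := by
          intro y
          have hcm := hham A hA d y
          rwa [show rlMeet d rlE = d from hde] at hcm
        set u := rlPow d k with hu
        have hue : rlLe u rlE := h.pow_le_e hde k
        set θ := hamCong h u hue hdc with hθ
        have hQ : Alg.mk (QuotAlg θ) ∈ V :=
          hV.1 A hA (QuotAlg θ) (quotHomRL θ) (quotHomRL_surjective θ)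
        set q := quotHomRL θ with hqdef
        have hπQ : ConjHolds π (⇑q ∘ v) := by
          intro ε hε
          unfold EqHolds
          rw [HomClass.realize_term, HomClass.realize_term]
          exact congrArg q (hπ ε hε)
        have hud : rlLe u d := by
          have hk1 : k = 1 + (k - 1) := by omega
          rw [hu, hk1, h.pow_add]
          have h1 : rlPow d 1 = d := by show rlMul d rlE = d; exact h.mul_one d
          rw [h1]
          exact h.mul_le_of_le_e' (h.pow_le_e hde (k - 1)) d
        have hpow1 : rlPow u 1 = u := by show rlMul u rlE = u; exact h.mul_one u
        have hub1 : rlLe (rlMul (rlPow u 1) b₁) b₂ := by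
          rw [hpow1, hdc b₁]
          exact h.le_trans (h.mul_le_mul_left b₁ hud) (h.equiv_mul_le_left b₁ b₂)
        have hub2 : rlLe (rlMul (rlPow u 1) b₂) b₁ := by
          rw [hpow1, hdc b₂]
          exact h.le_trans (h.mul_le_mul_left b₂ hud) (h.equiv_mul_le_right b₁ b₂)
        have hQb : q b₁ = q b₂ := Quotient.sound ⟨1, hub1, hub2⟩
        have htQ : t₁.realize (⇑q ∘ v) = t₂.realize (⇑q ∘ v) := by
          rw [HomClass.realize_term, HomClass.realize_term, ← hb₁, ← hb₂]
          exact hQb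
        have hsQ := H (Alg.mk (QuotAlg θ)) hQ (⇑q ∘ v) hπQ htQ
        rw [HomClass.realize_term, HomClass.realize_term, ← ha₁, ← ha₂] at hsQ
        obtain ⟨n, hn1, hn2⟩ := Quotient.exact hsQ
        have hun : rlLe (rlPow u n) (rlEquiv a₁ a₂) := by
          refine h.le_equiv (h.pow_le_e hue n) ?_ ?_
          · rw [← h.central_pow hdc n a₁]; exact hn1
          · rw [← h.central_pow hdc n a₂]; exact hn2
        have hcle : rlLe c rlE := by
          have hj := h.le_join_right d c
          rwa [hg2] at hj
        have claim : ∀ N, rlLe rlE (rlJoin c (rlPow d N)) := by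
          intro N
          induction N with
          | zero => exact h.le_join_right c rlE
          | succ N ih =>
              have he1 : rlLe rlE (rlJoin c d) := by
                rw [h.join_comm, hg2]; exact h.le_refl rlE
              have he2 : rlLe rlE (rlMul (rlJoin c (rlPow d N)) (rlJoin c d)) := by
                have hmm := h.mul_le_mul ih he1
                rwa [h.mul_one] at hmm
              refine h.le_trans he2 (h.join_mul_le ?_ ?_)
              · refine h.le_trans (h.mul_le_of_le_e' ?_ c) (h.le_join_left _ _)
                exact h.join_le hcle hde
              · refine h.mul_join_le ?_ ?_
                · exact h.le_trans (h.mul_le_of_le_e (h.pow_le_e hde N) c)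
                    (h.le_join_left _ _)
                · rw [show rlMul (rlPow d N) d = rlPow d (N + 1) from (h.pow_succ' d N).symm]
                  exact h.le_join_right _ _
        have hdkn : rlLe (rlPow d (k * n)) c := by
          rw [← h.pow_mul]
          exact h.le_trans hun hg1
        have hec : rlLe rlE c := h.le_trans (claim (k * n)) (h.join_le (h.le_refl c) hdkn)
        exact h.le_antisymm hcle hec
      · -- easy direction: instantiate the guard at `x₁ ≡ x₂`
        intro H A hA v hπ ht
        have h := hPRL A hA
        set a₁ := s₁.realize v with ha₁
        set a₂ := s₂.realize v with ha₂
        have hγ : ConjHolds γPRL (Sum.elim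
            ![a₁, a₂, t₁.realize v, t₂.realize v] fun _ => rlEquiv a₁ a₂) := by
          rw [conjHolds_gamma_iff]
          refine ⟨h.meet_self _, ?_⟩
          rw [ht, h.equiv_self, h.join_comm]
          exact h.join_eq_of_le (h.equiv_le_e a₁ a₂)
        have hφ := H A hA v hπ (fun _ => rlEquiv a₁ a₂) hγ
        rw [conjHolds_phi_iff] at hφ
        apply h.eq_of_e_le_equiv
        rw [show rlEquiv a₁ a₂ = rlE from hφ]
        exact h.le_refl rlE
    · intro σ
      constructor
      · intro H A hA v hπ
        have h := hPRL A hA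
        refine H A hA v (fun _ => rlE) hπ ?_
        rw [conjHolds_gamma_iff]
        exact ⟨h.equiv_le_e _ _, h.join_eq_of_le (h.equiv_le_e _ _)⟩
      · intro H A hA v w hπ _
        exact H A hA v hπ
  exact ⟨main, 1, γPRL, φPRL, main⟩

end Paper
end
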